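/- arXiv:2411.01359 — 8 statements merged into one kernel-verified Lean document; each statement's English description precedes it below -/
import Mathlib

section
/- Let 0 < p < 1 and R > 0, and let φ : (−R,R) → ℝ be continuously differentiable with all integrals below finite. Writing ⟨φ⟩ = (1/(2R)) ∫_{−R}^R φ(v) dv for the average of φ over (−R,R), the weighted Poincaré-type inequality ∫_{−R}^R (φ(w) − ⟨φ⟩)² dw ≤ (1/((2−p)(1−p))) ∫_{−R}^R (R^{2−p} − |w|^{2−p}) |w|^p |φ′(w)|² dw holds. -/
/-!
Cauchy–Schwarz with the weight `|x| ^ p` gives, for `v, w ∈ [-r, r]`,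
`(φ v - φ w) ^ 2 ≤ (h v - h w) * (K v - K w)`, where `h' = |x| ^ (-p)` and `K' = |x| ^ p * φ' ^ 2`.
Integrating in `v` and `w`, the left side becomes `4 r ∫ (φ - ⟨φ⟩) ^ 2` and the right side
`4 r ∫ h K - 2 ∫ h ∫ K = 4 r ∫ h K`, since `h` is odd. Integrating by parts against the primitive
`H = (|x| ^ (2 - p) - r ^ (2 - p)) / ((2 - p) (1 - p))` of `h`, which vanishes at `± r`, turns
`∫ h K` into the weighted integral of `φ' ^ 2`. This proves the inequality for `φ` of class `C¹`
on `[-r, r]`; letting `r ↑ R` gives it on `(-R, R)`.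
-/

open MeasureTheory Set Filter Topology

section Variance

variable {α : Type*} [MeasurableSpace α] {μ : Measure α} {f g : α → ℝ}

theorem sq_integral_mul_le_integral_sq_mul_integral_sq
    (hf : Integrable (fun x => f x ^ 2) μ) (hg : Integrable (fun x => g x ^ 2) μ)
    (hfg : Integrable (fun x => f x * g x) μ) :
    (∫ x, f x * g x ∂μ) ^ 2 ≤ (∫ x, f x ^ 2 ∂μ) * ∫ x, g x ^ 2 ∂μ := by
  have hquad : ∀ t : ℝ, 0 ≤ (∫ x, f x ^ 2 ∂μ) * (t * t) + 2 * (∫ x, f x * g x ∂μ) * t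
      + ∫ x, g x ^ 2 ∂μ := by
    intro t
    have hexp : ∀ x, (t * f x + g x) ^ 2 = t ^ 2 * f x ^ 2 + 2 * t * (f x * g x) + g x ^ 2 :=
      fun x => by ring
    have hnonneg : 0 ≤ ∫ x, (t * f x + g x) ^ 2 ∂μ := integral_nonneg fun x => sq_nonneg _
    simp only [hexp] at hnonneg
    rw [integral_add _ hg, integral_add (hf.const_mul _) (hfg.const_mul _), integral_const_mul,
      integral_const_mul] at hnonneg
    · linarith
    · exact (hf.const_mul _).add (hfg.const_mul _)
  have := discrim_le_zero hquad
  rw [discrim] at this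
  linarith

variable [IsFiniteMeasure μ]

theorem integrable_const_sub_mul_const_sub (hf : Integrable f μ) (hg : Integrable g μ)
    (hfg : Integrable (fun x => f x * g x) μ) (a b : ℝ) :
    Integrable (fun y => (a - f y) * (b - g y)) μ := by
  have hexp : ∀ y, (a - f y) * (b - g y) = a * b - a * g y - b * f y + f y * g y :=
    fun y => by ring
  simp only [hexp]
  exact (((integrable_const _).sub (hg.const_mul a)).sub (hf.const_mul b)).add hfg

theorem integral_const_sub_mul_const_sub (hf : Integrable f μ) (hg : Integrable g μ)
    (hfg : Integrable (fun x => f x * g x) μ) (a b : ℝ) :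
    ∫ y, (a - f y) * (b - g y) ∂μ
      = μ.real univ * (a * b) - a * ∫ y, g y ∂μ - b * ∫ y, f y ∂μ + ∫ y, f y * g y ∂μ := by
  have hexp : ∀ y, (a - f y) * (b - g y) = a * b - a * g y - b * f y + f y * g y :=
    fun y => by ring
  simp only [hexp]
  rw [integral_add _ hfg, integral_sub _ (hf.const_mul b),
    integral_sub (integrable_const _) (hg.const_mul a), integral_const, integral_const_mul,
    integral_const_mul, smul_eq_mul]
  · exact (integrable_const _).sub (hg.const_mul a)
  · exact ((integrable_const _).sub (hg.const_mul a)).sub (hf.const_mul b)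

theorem integral_sub_const_sq (hf : Integrable f μ) (hf2 : Integrable (fun x => f x ^ 2) μ)
    (c : ℝ) :
    ∫ x, (f x - c) ^ 2 ∂μ
      = ∫ x, f x ^ 2 ∂μ - 2 * c * ∫ x, f x ∂μ + μ.real univ * c ^ 2 := by
  have := integral_const_sub_mul_const_sub hf hf (by simpa only [sq] using hf2) c c
  simp only [← sq] at this
  simp only [sub_sq_comm _ c, this]
  ring

theorem integrable_sq_of_integrable_sq_sub_const {c : ℝ} (hf : Integrable f μ)
    (hfc : Integrable (fun x => (f x - c) ^ 2) μ) : Integrable (fun x => f x ^ 2) μ := by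
  have hexp : ∀ x, f x ^ 2 = (f x - c) ^ 2 + (2 * c * f x - c ^ 2) := fun x => by ring
  simp only [hexp]
  exact hfc.add ((hf.const_mul _).sub (integrable_const _))

theorem integrable_integral_sub_mul_sub (hf : Integrable f μ) (hg : Integrable g μ)
    (hfg : Integrable (fun x => f x * g x) μ) :
    Integrable (fun x => ∫ y, (f x - f y) * (g x - g y) ∂μ) μ := by
  simp only [integral_const_sub_mul_const_sub hf hg hfg]
  exact (((hfg.const_mul _).sub (hf.mul_const _)).sub (hg.mul_const _)).add (integrable_const _)

theorem integral_integral_sub_mul_sub (hf : Integrable f μ) (hg : Integrable g μ)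
    (hfg : Integrable (fun x => f x * g x) μ) :
    ∫ x, ∫ y, (f x - f y) * (g x - g y) ∂μ ∂μ
      = 2 * (μ.real univ * ∫ x, f x * g x ∂μ - (∫ x, f x ∂μ) * ∫ x, g x ∂μ) := by
  simp only [integral_const_sub_mul_const_sub hf hg hfg]
  rw [integral_add _ (integrable_const _), integral_sub _ (hg.mul_const _),
    integral_sub (hfg.const_mul _) (hf.mul_const _), integral_const_mul, integral_mul_const,
    integral_mul_const, integral_const, smul_eq_mul]
  · ring
  · exact (hfg.const_mul _).sub (hf.mul_const _)
  · exact ((hfg.const_mul _).sub (hf.mul_const _)).sub (hg.mul_const _)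

theorem mul_integral_sq_sub_sq_integral_le {h K : α → ℝ} (hf : Integrable f μ)
    (hf2 : Integrable (fun x => f x ^ 2) μ) (hh : Integrable h μ) (hK : Integrable K μ)
    (hhK : Integrable (fun x => h x * K x) μ)
    (hle : ∀ᵐ x ∂μ, ∀ᵐ y ∂μ, (f x - f y) ^ 2 ≤ (h x - h y) * (K x - K y)) :
    μ.real univ * ∫ x, f x ^ 2 ∂μ - (∫ x, f x ∂μ) ^ 2
      ≤ μ.real univ * ∫ x, h x * K x ∂μ - (∫ x, h x ∂μ) * ∫ x, K x ∂μ := by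
  have hff : Integrable (fun x => f x * f x) μ := by simpa only [sq] using hf2
  have hdouble : ∫ x, ∫ y, (f x - f y) * (f x - f y) ∂μ ∂μ
      ≤ ∫ x, ∫ y, (h x - h y) * (K x - K y) ∂μ ∂μ := by
    refine integral_mono_ae (integrable_integral_sub_mul_sub hf hf hff)
      (integrable_integral_sub_mul_sub hh hK hhK) ?_
    filter_upwards [hle] with x hx
    refine integral_mono_ae (integrable_const_sub_mul_const_sub hf hf hff _ _)
      (integrable_const_sub_mul_const_sub hh hK hhK _ _) ?_
    filter_upwards [hx] with y hy
    simpa only [sq] using hy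
  rw [integral_integral_sub_mul_sub hf hf hff, integral_integral_sub_mul_sub hh hK hhK] at hdouble
  simp only [← sq] at hdouble
  linarith

end Variance

section AbsRpow

variable {x : ℝ}

theorem hasDerivAt_abs_rpow_of_ne_zero (q : ℝ) (hx : x ≠ 0) :
    HasDerivAt (fun y => |y| ^ q) (q * |x| ^ (q - 2) * x) x := by
  have hx' : |x| ≠ 0 := abs_ne_zero.mpr hx
  convert (hasDerivAt_abs hx).rpow_const (p := q) (Or.inl hx') using 1
  rw [show q - 1 = q - 2 + 1 by ring, Real.rpow_add_one hx']
  linear_combination (-q * |x| ^ (q - 2)) * sign_mul_abs x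

theorem hasDerivAt_mul_abs_rpow (q : ℝ) (hx : x ≠ 0) :
    HasDerivAt (fun y => y * |y| ^ q) ((q + 1) * |x| ^ q) x := by
  have hx' : |x| ≠ 0 := abs_ne_zero.mpr hx
  have hsq : |x| ^ (q - 2) * x * x = |x| ^ q := by
    rw [mul_assoc, ← abs_mul_abs_self, ← mul_assoc, ← Real.rpow_add_one hx',
      ← Real.rpow_add_one hx']
    ring_nf
  refine ((hasDerivAt_id' x).mul (hasDerivAt_abs_rpow_of_ne_zero q hx)).congr_deriv ?_
  linear_combination q * hsq

theorem continuous_mul_abs_rpow {q : ℝ} (hq : -1 < q) : Continuous fun x : ℝ => x * |x| ^ q := by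
  refine continuous_iff_continuousAt.mpr fun x => ?_
  rcases eq_or_ne x 0 with rfl | hx
  · have hnorm : ∀ y : ℝ, ‖y * |y| ^ q‖ = |y| ^ (q + 1) := fun y => by
      rw [Real.norm_eq_abs, abs_mul, abs_of_nonneg (Real.rpow_nonneg (abs_nonneg y) q), add_comm,
        Real.rpow_add' (abs_nonneg y) (by linarith), Real.rpow_one]
    have hlim : Tendsto (fun y : ℝ => |y| ^ (q + 1)) (𝓝 0) (𝓝 0) := by
      simpa [Real.zero_rpow (by linarith : q + 1 ≠ 0)] using
        (continuous_abs.rpow_const fun _ => Or.inr (by linarith : 0 ≤ q + 1)).tendsto 0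
    simpa [ContinuousAt] using squeeze_zero_norm (fun y => (hnorm y).le) hlim
  · exact (hasDerivAt_mul_abs_rpow q hx).continuousAt

theorem intervalIntegrable_abs_rpow {q : ℝ} (hq : -1 < q) (a b : ℝ) :
    IntervalIntegrable (fun x => |x| ^ q) volume a b := by
  have hpos : ∀ c, 0 ≤ c → IntervalIntegrable (fun x => |x| ^ q) volume 0 c := fun c hc =>
    (intervalIntegral.intervalIntegrable_rpow' hq).congr fun x hx => by
      rw [uIoc_of_le hc] at hx
      simp only [abs_of_pos hx.1]
  have hzero : ∀ c, IntervalIntegrable (fun x => |x| ^ q) volume 0 c := fun c => by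
    rcases le_total 0 c with hc | hc
    · exact hpos c hc
    · simpa using (IntervalIntegrable.iff_comp_neg (by simp)).mp (hpos (-c) (by linarith))
  exact (hzero a).symm.trans (hzero b)

theorem integral_abs_rpow {q : ℝ} (hq : -1 < q) (a b : ℝ) :
    ∫ x in a..b, |x| ^ q = (b * |b| ^ q - a * |a| ^ q) / (q + 1) := by
  have hq1 : q + 1 ≠ 0 := by linarith
  rw [integral_eq_of_hasDerivAt_off_countable (fun x => x * |x| ^ q / (q + 1)) _
    (countable_singleton 0) ((continuous_mul_abs_rpow hq).div_const _).continuousOn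
    (fun x hx => ?_) (intervalIntegrable_abs_rpow hq a b)]
  · ring
  · exact ((hasDerivAt_mul_abs_rpow q hx.2).div_const (q + 1)).congr_deriv (by field_simp)

end AbsRpow

theorem ContinuousOn.continuousOn_primitive_Icc {g : ℝ → ℝ} {a b c : ℝ}
    (hg : ContinuousOn g (Icc a b)) (hc : c ∈ Icc a b) :
    ContinuousOn (fun x => ∫ t in c..x, g t) (Icc a b) := by
  have hab : uIcc a b = Icc a b := uIcc_of_le (hc.1.trans hc.2)
  rw [← hab] at hg hc ⊢
  exact intervalIntegral.continuousOn_primitive_interval' hg.intervalIntegrable hc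

theorem sq_sub_le_integral_inv_mul_integral_mul_sq {φ φ' ρ : ℝ → ℝ} {a b : ℝ}
    (hderiv : ∀ x ∈ uIcc a b, HasDerivAt φ (φ' x) x) (hφ' : IntervalIntegrable φ' volume a b)
    (hρ0 : ∀ x, 0 ≤ ρ x) (hρ : ∀ᵐ x, ρ x ≠ 0)
    (hρinv : IntervalIntegrable (fun x => (ρ x)⁻¹) volume a b)
    (hρφ' : IntervalIntegrable (fun x => ρ x * φ' x ^ 2) volume a b) :
    (φ b - φ a) ^ 2 ≤ (∫ x in a..b, (ρ x)⁻¹) * ∫ x in a..b, ρ x * φ' x ^ 2 := by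
  wlog hab : a ≤ b generalizing a b
  · have := this (by rwa [uIcc_comm]) hφ'.symm hρinv.symm hρφ'.symm (le_of_not_ge hab)
    rwa [intervalIntegral.integral_symm a b, intervalIntegral.integral_symm a b, neg_mul_neg,
      sub_sq_comm] at this
  rw [← intervalIntegral.integral_eq_sub_of_hasDerivAt hderiv hφ']
  simp only [intervalIntegral.integral_of_le hab]
  rw [intervalIntegrable_iff_integrableOn_Ioc_of_le hab] at hφ' hρinv hρφ'
  have hsq_inv : ∀ x, √(ρ x)⁻¹ ^ 2 = (ρ x)⁻¹ := fun x => Real.sq_sqrt (inv_nonneg.2 (hρ0 x))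
  have hsq_mul : ∀ x, (√(ρ x) * φ' x) ^ 2 = ρ x * φ' x ^ 2 := fun x => by
    rw [mul_pow, Real.sq_sqrt (hρ0 x)]
  have hprod : (fun x => √(ρ x)⁻¹ * (√(ρ x) * φ' x)) =ᵐ[volume.restrict (Ioc a b)] φ' := by
    filter_upwards [ae_restrict_of_ae hρ] with x hx
    rw [Real.sqrt_inv, ← mul_assoc,
      inv_mul_cancel₀ (Real.sqrt_ne_zero'.2 ((hρ0 x).lt_of_ne' hx)), one_mul]
  have hCS := sq_integral_mul_le_integral_sq_mul_integral_sq (μ := volume.restrict (Ioc a b))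
    (f := fun x => √(ρ x)⁻¹) (g := fun x => √(ρ x) * φ' x)
    (by simp only [hsq_inv]; exact hρinv) (by simp only [hsq_mul]; exact hρφ')
    (hφ'.congr_fun_ae hprod.symm)
  simpa only [hsq_inv, hsq_mul, integral_congr_ae hprod] using hCS

theorem sq_sub_le_mul_integral_abs_rpow_mul_sq {p v w : ℝ} {φ φ' : ℝ → ℝ} (hp0 : -1 < p)
    (hp1 : p < 1) (hderiv : ∀ x ∈ uIcc w v, HasDerivAt φ (φ' x) x)
    (hcont : ContinuousOn φ' (uIcc w v)) :
    (φ v - φ w) ^ 2 ≤ (v * |v| ^ (-p) / (1 - p) - w * |w| ^ (-p) / (1 - p))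
      * ∫ x in w..v, |x| ^ p * φ' x ^ 2 := by
  have hCS := sq_sub_le_integral_inv_mul_integral_mul_sq (ρ := fun x => |x| ^ p)
    hderiv hcont.intervalIntegrable (fun x => Real.rpow_nonneg (abs_nonneg x) p)
    ((Measure.ae_ne volume 0).mono fun x hx => (Real.rpow_pos_of_pos (abs_pos.2 hx) p).ne')
    (by simpa only [Real.rpow_neg (abs_nonneg _)] using
      intervalIntegrable_abs_rpow (by linarith : -1 < -p) w v)
    ((intervalIntegrable_abs_rpow hp0 w v).mul_continuousOn (hcont.pow 2))
  simp only [← Real.rpow_neg (abs_nonneg _)] at hCS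
  rwa [integral_abs_rpow (by linarith), neg_add_eq_sub, sub_div] at hCS

section SymmetricInterval

variable {r : ℝ}

theorem setIntegral_Ioo_neg_self_eq_intervalIntegral (f : ℝ → ℝ) (hr : 0 ≤ r) :
    ∫ x in Ioo (-r) r, f x = ∫ x in -r..r, f x := by
  rw [intervalIntegral.integral_of_le (by linarith), integral_Ioc_eq_integral_Ioo]

theorem intervalIntegral.integral_neg_self_of_odd {f : ℝ → ℝ} (hf : ∀ x, f (-x) = -f x) (r : ℝ) :
    ∫ x in -r..r, f x = 0 := by
  have := intervalIntegral.integral_comp_neg (a := -r) (b := r) f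
  simp only [hf, intervalIntegral.integral_neg, neg_neg] at this
  linarith

theorem setIntegral_sq_sub_average_Ioo {φ : ℝ → ℝ} (hr : 0 < r)
    (hφ : IntegrableOn φ (Ioo (-r) r)) (hφ2 : IntegrableOn (fun w => φ w ^ 2) (Ioo (-r) r)) :
    ∫ w in Ioo (-r) r, (φ w - (1 / (2 * r)) * ∫ v in Ioo (-r) r, φ v) ^ 2
      = (∫ w in Ioo (-r) r, φ w ^ 2) - (∫ w in Ioo (-r) r, φ w) ^ 2 / (2 * r) := by
  rw [integral_sub_const_sq hφ hφ2, measureReal_restrict_apply_univ,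
    Real.volume_real_Ioo_of_le (by linarith)]
  generalize ∫ v in Ioo (-r) r, φ v = A
  generalize ∫ v in Ioo (-r) r, φ v ^ 2 = B
  field_simp
  ring

theorem setIntegral_mul_abs_rpow_mul_primitive {p : ℝ} {g : ℝ → ℝ} (hp : p < 1) (hr : 0 ≤ r)
    (hg : ContinuousOn g (Icc (-r) r)) :
    ∫ x in Ioo (-r) r, x * |x| ^ (-p) / (1 - p) * ∫ t in 0..x, g t
      = 1 / ((2 - p) * (1 - p)) * ∫ x in Ioo (-r) r, (r ^ (2 - p) - |x| ^ (2 - p)) * g x := by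
  have hIcc : uIcc (-r) r = Icc (-r) r := uIcc_of_le (by linarith)
  set K : ℝ → ℝ := fun x => ∫ t in 0..x, g t
  set H : ℝ → ℝ := fun x => (|x| ^ (2 - p) - r ^ (2 - p)) / ((2 - p) * (1 - p))
  have hKc : ContinuousOn K (Icc (-r) r) := hg.continuousOn_primitive_Icc ⟨by linarith, hr⟩
  have hK : ∀ x ∈ Ioo (min (-r) r) (max (-r) r), HasDerivAt K (g x) x := fun x hx => by
    rw [min_eq_left (by linarith), max_eq_right (by linarith)] at hx
    exact intervalIntegral.integral_hasDerivAt_right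
      (hg.mono (uIcc_subset_Icc ⟨by linarith, hr⟩ (Ioo_subset_Icc_self hx))).intervalIntegrable
      ((hg.mono Ioo_subset_Icc_self).stronglyMeasurableAtFilter isOpen_Ioo x hx)
      (hg.continuousAt (Icc_mem_nhds hx.1 hx.2))
  have hH : ∀ x, HasDerivAt H (x * |x| ^ (-p) / (1 - p)) x := fun x =>
    (((hasDerivAt_abs_rpow x (by linarith : 1 < 2 - p)).sub_const (r ^ (2 - p))).div_const
      _).congr_deriv (by
        rw [show 2 - p - 2 = -p by ring]
        field_simp [(by linarith : 2 - p ≠ 0)])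
  have hparts := intervalIntegral.integral_mul_deriv_eq_deriv_mul_of_hasDerivAt (hIcc ▸ hKc)
    (continuous_iff_continuousAt.2 fun x => (hH x).continuousAt).continuousOn hK
    (fun x _ => hH x) (hIcc ▸ hg).intervalIntegrable
    (((continuous_mul_abs_rpow (by linarith)).div_const _).intervalIntegrable _ _)
  rw [setIntegral_Ioo_neg_self_eq_intervalIntegral _ hr,
    setIntegral_Ioo_neg_self_eq_intervalIntegral _ hr, ← intervalIntegral.integral_const_mul,
    intervalIntegral.integral_congr fun x _ => mul_comm _ (K x), hparts]
  simp only [H, abs_neg, abs_of_nonneg hr, sub_self, zero_div, mul_zero, zero_sub,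
    ← intervalIntegral.integral_neg]
  refine intervalIntegral.integral_congr fun x _ => ?_
  field_simp
  ring

theorem setIntegral_sq_sub_average_le_weighted {p : ℝ} {φ φ' : ℝ → ℝ} (hp0 : 0 ≤ p)
    (hp1 : p < 1) (hr : 0 < r) (hderiv : ∀ w ∈ Icc (-r) r, HasDerivAt φ (φ' w) w)
    (hcont : ContinuousOn φ' (Icc (-r) r)) :
    ∫ w in Ioo (-r) r, (φ w - (1 / (2 * r)) * ∫ v in Ioo (-r) r, φ v) ^ 2
      ≤ (1 / ((2 - p) * (1 - p)))
        * ∫ w in Ioo (-r) r, (r ^ (2 - p) - |w| ^ (2 - p)) * |w| ^ p * (φ' w) ^ 2 := by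
  have hIoo : ∀ F : ℝ → ℝ, ContinuousOn F (Icc (-r) r) → IntegrableOn F (Ioo (-r) r) :=
    fun F hF => hF.integrableOn_Icc.mono_set Ioo_subset_Icc_self
  set g : ℝ → ℝ := fun x => |x| ^ p * φ' x ^ 2
  set K : ℝ → ℝ := fun x => ∫ t in 0..x, g t
  set h : ℝ → ℝ := fun x => x * |x| ^ (-p) / (1 - p)
  have hφc : ContinuousOn φ (Icc (-r) r) := fun x hx =>
    (hderiv x hx).continuousAt.continuousWithinAt
  have hgc : ContinuousOn g (Icc (-r) r) :=
    (continuous_abs.rpow_const fun _ => Or.inr hp0).continuousOn.mul (hcont.pow 2)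
  have hprim : ∀ x ∈ Icc (-r) r, IntervalIntegrable g volume 0 x := fun x hx =>
    (hgc.mono (uIcc_subset_Icc ⟨by linarith, hr.le⟩ hx)).intervalIntegrable
  have hKc : ContinuousOn K (Icc (-r) r) := hgc.continuousOn_primitive_Icc ⟨by linarith, hr.le⟩
  have hhc : Continuous h := (continuous_mul_abs_rpow (by linarith)).div_const _
  have hpt : ∀ v ∈ Icc (-r) r, ∀ w ∈ Icc (-r) r, (φ v - φ w) ^ 2 ≤ (h v - h w) * (K v - K w) := by
    intro v hv w hw
    rw [intervalIntegral.integral_interval_sub_left (hprim v hv) (hprim w hw)]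
    exact sq_sub_le_mul_integral_abs_rpow_mul_sq (by linarith) hp1
      (fun x hx => hderiv x (uIcc_subset_Icc hw hv hx)) (hcont.mono (uIcc_subset_Icc hw hv))
  have hvar := mul_integral_sq_sub_sq_integral_le (μ := volume.restrict (Ioo (-r) r))
    (hIoo φ hφc) (hIoo _ (hφc.pow 2)) (hIoo h hhc.continuousOn) (hIoo K hKc)
    (hIoo _ (hhc.continuousOn.mul hKc)) (by
      filter_upwards [ae_restrict_mem measurableSet_Ioo] with x hx
      filter_upwards [ae_restrict_mem measurableSet_Ioo] with y hy
      exact hpt x (Ioo_subset_Icc_self hx) y (Ioo_subset_Icc_self hy))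
  have hh_mean : ∫ x in Ioo (-r) r, h x = 0 := by
    rw [setIntegral_Ioo_neg_self_eq_intervalIntegral _ hr.le,
      intervalIntegral.integral_neg_self_of_odd fun x => by simp only [h, abs_neg]; ring]
  have hweight : ∫ x in Ioo (-r) r, (r ^ (2 - p) - |x| ^ (2 - p)) * g x
      = ∫ w in Ioo (-r) r, (r ^ (2 - p) - |w| ^ (2 - p)) * |w| ^ p * (φ' w) ^ 2 := by
    simp only [g, mul_assoc]
  rw [hh_mean, zero_mul, sub_zero, measureReal_restrict_apply_univ,
    Real.volume_real_Ioo_of_le (by linarith), sub_neg_eq_add, ← two_mul,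
    setIntegral_mul_abs_rpow_mul_primitive hp1 hr.le hgc, hweight] at hvar
  rw [setIntegral_sq_sub_average_Ioo hr (hIoo φ hφc) (hIoo _ (hφc.pow 2))]
  refine le_of_mul_le_mul_left (hvar.trans_eq' ?_) (by positivity : (0 : ℝ) < 2 * r)
  field_simp

theorem continuousOn_setIntegral_Ioo_neg_self {f : ℝ → ℝ} {R : ℝ} (hR : 0 ≤ R)
    (hf : IntegrableOn f (Ioo (-R) R)) :
    ContinuousOn (fun r => ∫ x in Ioo (-r) r, f x) (Icc 0 R) := by
  have hfi : IntervalIntegrable f volume (-R) R :=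
    (intervalIntegrable_iff_integrableOn_Ioo_of_le (by linarith)).2 hf
  have hIcc : uIcc (-R) R = Icc (-R) R := uIcc_of_le (by linarith)
  have hF := intervalIntegral.continuousOn_primitive_interval' hfi (a := 0)
    (by rw [hIcc]; constructor <;> linarith)
  have hprim : ∀ x ∈ Icc (-R) R, IntervalIntegrable f volume 0 x := fun x hx =>
    hfi.mono_set (by rw [hIcc]; exact uIcc_subset_Icc ⟨by linarith, hR⟩ hx)
  rw [hIcc] at hF
  refine ((hF.mono fun r hr => ⟨by linarith [hr.1], hr.2⟩).sub
    (hF.comp continuousOn_neg fun r hr => ⟨by linarith [hr.2], by linarith [hr.1]⟩)).congr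
    fun r hr => ?_
  simp only [Pi.sub_apply, Function.comp_apply]
  rw [intervalIntegral.integral_interval_sub_left (hprim r ⟨by linarith [hr.1], hr.2⟩)
    (hprim (-r) ⟨by linarith [hr.2], by linarith [hr.1]⟩),
    setIntegral_Ioo_neg_self_eq_intervalIntegral _ hr.1]

theorem tendsto_setIntegral_sq_sub_average_Ioo {φ : ℝ → ℝ} {R : ℝ} (hR : 0 < R)
    (hφ : IntegrableOn φ (Ioo (-R) R)) (hφ2 : IntegrableOn (fun w => φ w ^ 2) (Ioo (-R) R)) :
    Tendsto (fun r => ∫ w in Ioo (-r) r, (φ w - (1 / (2 * r)) * ∫ v in Ioo (-r) r, φ v) ^ 2)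
      (𝓝[<] R) (𝓝 (∫ w in Ioo (-R) R, (φ w - (1 / (2 * R)) * ∫ v in Ioo (-R) R, φ v) ^ 2)) := by
  have hA := (continuousOn_setIntegral_Ioo_neg_self hR.le hφ).mono Ioc_subset_Icc_self
  have hB := (continuousOn_setIntegral_Ioo_neg_self hR.le hφ2).mono Ioc_subset_Icc_self
  have hV := hB.sub ((hA.pow 2).div₀ (continuousOn_const.mul continuousOn_id) fun r hr =>
    mul_ne_zero two_ne_zero hr.1.ne')
  rw [setIntegral_sq_sub_average_Ioo hR hφ hφ2, ← nhdsWithin_Ioo_eq_nhdsLT hR]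
  refine ((hV R ⟨hR, le_rfl⟩).mono Ioo_subset_Ioc_self).congr' ?_
  filter_upwards [self_mem_nhdsWithin] with r hr
  have hsub : Ioo (-r) r ⊆ Ioo (-R) R := Ioo_subset_Ioo (by linarith [hr.2]) hr.2.le
  exact (setIntegral_sq_sub_average_Ioo hr.1 (hφ.mono_set hsub) (hφ2.mono_set hsub)).symm

theorem setIntegral_Ioo_weight_le_of_le {p R : ℝ} {φ' : ℝ → ℝ} (hp : p ≤ 2) (hrR : r ≤ R)
    (hw : IntegrableOn (fun w => (R ^ (2 - p) - |w| ^ (2 - p)) * |w| ^ p * (φ' w) ^ 2)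
      (Ioo (-R) R)) :
    ∫ w in Ioo (-r) r, (r ^ (2 - p) - |w| ^ (2 - p)) * |w| ^ p * (φ' w) ^ 2
      ≤ ∫ w in Ioo (-R) R, (R ^ (2 - p) - |w| ^ (2 - p)) * |w| ^ p * (φ' w) ^ 2 := by
  have hweight : ∀ {s w : ℝ}, |w| ≤ s → 0 ≤ (s ^ (2 - p) - |w| ^ (2 - p)) * |w| ^ p * φ' w ^ 2 :=
    fun hws => mul_nonneg (mul_nonneg (sub_nonneg.2 (Real.rpow_le_rpow (abs_nonneg _) hws
      (by linarith))) (Real.rpow_nonneg (abs_nonneg _) _)) (sq_nonneg _)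
  have hsub : Ioo (-r) r ⊆ Ioo (-R) R := Ioo_subset_Ioo (by linarith) hrR
  calc _ ≤ ∫ w in Ioo (-r) r, (R ^ (2 - p) - |w| ^ (2 - p)) * |w| ^ p * (φ' w) ^ 2 := by
        refine integral_mono_of_nonneg ?_ (hw.mono_set hsub) ?_ <;>
          filter_upwards [ae_restrict_mem measurableSet_Ioo] with w hw
        · exact hweight (abs_lt.2 hw).le
        · have hr : 0 ≤ r := by linarith [hw.1, hw.2]
          gcongr
    _ ≤ _ := setIntegral_mono_set hw
        (by filter_upwards [ae_restrict_mem measurableSet_Ioo] with w hw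
            exact hweight (abs_lt.2 hw).le)
        hsub.eventuallyLE

end SymmetricInterval

/-- Weighted Poincaré-type inequality on `(-R,R)` with weight
`(R^(2-p) - |w|^(2-p)) |w|^p`, `0 < p < 1`. -/
theorem weighted_poincare_p
    (p R : ℝ) (φ φ' : ℝ → ℝ)
    (hp0 : 0 < p) (hp1 : p < 1) (hR : 0 < R)
    (hderiv : ∀ w ∈ Ioo (-R) R, HasDerivAt φ (φ' w) w)
    (hcont : ContinuousOn φ' (Ioo (-R) R))
    (hφ : IntegrableOn φ (Ioo (-R) R))
    (hφ2 : IntegrableOn (fun w => (φ w - (1 / (2 * R)) * ∫ v in Ioo (-R) R, φ v) ^ 2)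
      (Ioo (-R) R))
    (hw : IntegrableOn (fun w => (R ^ (2 - p) - |w| ^ (2 - p)) * |w| ^ p * (φ' w) ^ 2)
      (Ioo (-R) R)) :
    ∫ w in Ioo (-R) R, (φ w - (1 / (2 * R)) * ∫ v in Ioo (-R) R, φ v) ^ 2
      ≤ (1 / ((2 - p) * (1 - p)))
        * ∫ w in Ioo (-R) R, (R ^ (2 - p) - |w| ^ (2 - p)) * |w| ^ p * (φ' w) ^ 2 := by
  have hφsq := integrable_sq_of_integrable_sq_sub_const hφ hφ2
  refine le_of_tendsto (tendsto_setIntegral_sq_sub_average_Ioo hR hφ hφsq) ?_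
  filter_upwards [Ioo_mem_nhdsLT hR] with r hr
  have hIcc : Icc (-r) r ⊆ Ioo (-R) R := Icc_subset_Ioo (by linarith [hr.2]) hr.2
  calc _ ≤ (1 / ((2 - p) * (1 - p)))
          * ∫ w in Ioo (-r) r, (r ^ (2 - p) - |w| ^ (2 - p)) * |w| ^ p * (φ' w) ^ 2 :=
        setIntegral_sq_sub_average_le_weighted hp0.le hp1 hr.1
          (fun w hw => hderiv w (hIcc hw)) (hcont.mono hIcc)
    _ ≤ _ := by
        gcongr
        · exact one_div_nonneg.2 (mul_nonneg (by linarith) (by linarith))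
        · exact setIntegral_Ioo_weight_le_of_le (by linarith) hr.2.le hw
end

section
/- Let R > 0 and let φ : [−R,R] → ℝ be continuously differentiable. Then ∫_{−R}^R (1/(2R)) ∫_0^1 |φ′(wt)|² |w|^{3/2} dt dw ≤ (1/(3R)) ∫_{−R}^R (R^{3/2} − |w|^{3/2}) |φ′(w)|² dw. -/
open MeasureTheory Set

/-! For `w ≠ 0` the substitution `u = w t` gives `∫₀¹ G (w t) dt = w⁻¹ ∫₀ʷ G`, with `G = φ'²`.
On each half of `(-R, R)` the left-hand integrand is therefore `|w| ^ (1/2)` times a primitive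
of `G`, and one integration by parts against `(2/3) w ^ (3/2)` turns it into
`(2/3) ∫ (R ^ (3/2) - |w| ^ (3/2)) G`: the inequality is in fact an equality. -/

theorem intervalIntegral.integral_neg_self_eq_add_comp_neg {f : ℝ → ℝ} {R : ℝ} (hR : 0 ≤ R)
    (hf : IntervalIntegrable f volume (-R) R) :
    ∫ x in -R..R, f x = (∫ x in (0:ℝ)..R, f x) + ∫ x in (0:ℝ)..R, f (-x) := by
  have h0 : (0:ℝ) ∈ uIcc (-R) R := mem_uIcc_of_le (by linarith) hR
  rw [← intervalIntegral.integral_add_adjacent_intervals (b := 0)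
    (hf.mono_set (uIcc_subset_uIcc_left h0)) (hf.mono_set (uIcc_subset_uIcc_right h0)),
    intervalIntegral.integral_comp_neg, neg_zero]
  exact add_comm _ _

section
variable {G : ℝ → ℝ} {p : ℝ}

theorem integral_rpow_sub_one_mul_integral (hG : Continuous G) (hp : 1 ≤ p) (R : ℝ) :
    ∫ w in (0:ℝ)..R, w ^ (p - 1) * ∫ u in (0:ℝ)..w, G u
      = p⁻¹ * ∫ w in (0:ℝ)..R, (R ^ p - w ^ p) * G w := by
  have hv : ∀ x : ℝ, HasDerivAt (fun y : ℝ => y ^ p / p) (x ^ (p - 1)) x := fun x => by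
    simpa [mul_div_cancel_left₀ _ (by positivity : p ≠ 0)] using
      (Real.hasDerivAt_rpow_const (x := x) (Or.inr hp)).div_const p
  have hibp := intervalIntegral.integral_mul_deriv_eq_deriv_mul
    (fun x _ => (hG.integral_hasStrictDerivAt 0 x).hasDerivAt) (fun x _ => hv x)
    (hG.intervalIntegrable 0 R)
    ((Real.continuous_rpow_const (by linarith : 0 ≤ p - 1)).intervalIntegrable 0 R)
  have hpow : Continuous fun x : ℝ => x ^ p := Real.continuous_rpow_const (by linarith)
  have hsub := intervalIntegral.integral_sub (a := 0) (b := R)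
    ((by fun_prop : Continuous fun w => R ^ p * G w).intervalIntegrable (μ := volume) _ _)
    ((by fun_prop : Continuous fun w => w ^ p * G w).intervalIntegrable (μ := volume) _ _)
  calc ∫ w in (0:ℝ)..R, w ^ (p - 1) * ∫ u in (0:ℝ)..w, G u
      = (∫ u in (0:ℝ)..R, G u) * (R ^ p / p) - ∫ w in (0:ℝ)..R, G w * (w ^ p / p) := by
        simp_rw [mul_comm (_ ^ (p - 1)), hibp, intervalIntegral.integral_same, zero_mul, sub_zero]
    _ = p⁻¹ * ((∫ w in (0:ℝ)..R, R ^ p * G w) - ∫ w in (0:ℝ)..R, w ^ p * G w) := by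
        have hw : ∀ w : ℝ, G w * (w ^ p / p) = p⁻¹ * (w ^ p * G w) := fun w => by ring
        simp_rw [hw, intervalIntegral.integral_const_mul]
        ring
    _ = p⁻¹ * ∫ w in (0:ℝ)..R, (R ^ p - w ^ p) * G w := by
        simp_rw [← hsub, sub_mul]

theorem rpow_mul_integral_comp_mul (hp : 1 ≤ p) {w : ℝ} (hw : 0 ≤ w) :
    w ^ p * ∫ t in (0:ℝ)..1, G (w * t) = w ^ (p - 1) * ∫ u in (0:ℝ)..w, G u := by
  conv_lhs => rw [← sub_add_cancel p 1, Real.rpow_add' hw (by linarith), Real.rpow_one, mul_assoc,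
    intervalIntegral.mul_integral_comp_mul_left]
  simp

theorem integral_rpow_mul_integral_comp_mul (hG : Continuous G) (hp : 1 ≤ p) {R : ℝ}
    (hR : 0 ≤ R) :
    ∫ w in (0:ℝ)..R, w ^ p * ∫ t in (0:ℝ)..1, G (w * t)
      = p⁻¹ * ∫ w in (0:ℝ)..R, (R ^ p - w ^ p) * G w := by
  rw [← integral_rpow_sub_one_mul_integral hG hp R]
  refine intervalIntegral.integral_congr fun w hw => rpow_mul_integral_comp_mul hp ?_
  exact (uIcc_of_le hR ▸ hw).1

theorem integral_abs_rpow_mul_integral_comp_mul (hG : Continuous G) (hp : 1 ≤ p) {R : ℝ}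
    (hR : 0 ≤ R) :
    ∫ w in -R..R, |w| ^ p * ∫ t in (0:ℝ)..1, G (w * t)
      = p⁻¹ * ∫ w in -R..R, (R ^ p - |w| ^ p) * G w := by
  have half : ∀ H : ℝ → ℝ, Continuous H →
      ∫ w in (0:ℝ)..R, |w| ^ p * ∫ t in (0:ℝ)..1, H (w * t)
        = p⁻¹ * ∫ w in (0:ℝ)..R, (R ^ p - |w| ^ p) * H w := by
    intro H hH
    have habs : ∀ w ∈ uIcc 0 R, |w| = w := fun w hw => abs_of_nonneg (uIcc_of_le hR ▸ hw).1
    calc ∫ w in (0:ℝ)..R, |w| ^ p * ∫ t in (0:ℝ)..1, H (w * t)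
        = ∫ w in (0:ℝ)..R, w ^ p * ∫ t in (0:ℝ)..1, H (w * t) :=
          intervalIntegral.integral_congr fun w hw => by simp only [habs w hw]
      _ = p⁻¹ * ∫ w in (0:ℝ)..R, (R ^ p - w ^ p) * H w :=
          integral_rpow_mul_integral_comp_mul hH hp hR
      _ = p⁻¹ * ∫ w in (0:ℝ)..R, (R ^ p - |w| ^ p) * H w := by
          congr 1
          exact intervalIntegral.integral_congr fun w hw => by simp only [habs w hw]
  have habs : Continuous fun w : ℝ => |w| ^ p :=
    (Real.continuous_rpow_const (by linarith)).comp continuous_abs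
  have hleft : Continuous fun w => |w| ^ p * ∫ t in (0:ℝ)..1, G (w * t) := by fun_prop
  have hright : Continuous fun w => (R ^ p - |w| ^ p) * G w := by fun_prop
  have hneg := half (fun x => G (-x)) (hG.comp continuous_neg)
  rw [intervalIntegral.integral_neg_self_eq_add_comp_neg hR (hleft.intervalIntegrable _ _),
    intervalIntegral.integral_neg_self_eq_add_comp_neg hR (hright.intervalIntegrable _ _)]
  simp only [abs_neg, neg_mul, half G hG, hneg]
  ring

end

theorem mul_mem_Icc_neg_of_mem_Icc {R w t : ℝ} (hw : w ∈ Icc (-R) R) (ht : t ∈ Icc (0:ℝ) 1) :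
    w * t ∈ Icc (-R) R := by
  rw [mem_Icc, ← abs_le] at hw ⊢
  rw [abs_mul]
  exact (mul_le_of_le_one_right (abs_nonneg w) (abs_le.2 ⟨by linarith [ht.1], ht.2⟩)).trans hw

theorem averaged_dirichlet_bound_general
    (R : ℝ) (φ' : ℝ → ℝ) (hR : 0 < R)
    (hcont : ContinuousOn φ' (Icc (-R) R)) :
    ∫ w in Ioo (-R) R, (1 / (2 * R))
        * ∫ t in Icc (0:ℝ) 1, (φ' (w * t)) ^ 2 * |w| ^ ((3:ℝ) / 2)
      ≤ (1 / (3 * R))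
        * ∫ w in Ioo (-R) R, (R ^ ((3:ℝ) / 2) - |w| ^ ((3:ℝ) / 2)) * (φ' w) ^ 2 := by
  set g := IccExtend (neg_le_self hR.le) ((Icc (-R) R).domRestrict φ')
  have hg : Continuous g := hcont.domRestrict.Icc_extend'
  have hgφ : ∀ x ∈ Icc (-R) R, g x = φ' x := fun x hx => IccExtend_of_mem _ _ hx
  have hIoo : ∀ f : ℝ → ℝ, ∫ w in Ioo (-R) R, f w = ∫ w in -R..R, f w := fun f => by
    rw [intervalIntegral.integral_of_le (neg_le_self hR.le), integral_Ioc_eq_integral_Ioo]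
  have hinner : EqOn (fun w => ∫ t in Icc (0:ℝ) 1, (φ' (w * t)) ^ 2 * |w| ^ ((3:ℝ) / 2))
      (fun w => |w| ^ ((3:ℝ) / 2) * ∫ t in (0:ℝ)..1, g (w * t) ^ 2) (Ioo (-R) R) := fun w hw => by
    dsimp only
    rw [integral_Icc_eq_integral_Ioc, ← intervalIntegral.integral_of_le zero_le_one,
      intervalIntegral.integral_mul_const, mul_comm]
    refine congrArg _ (intervalIntegral.integral_congr fun t ht => ?_)
    rw [hgφ _ (mul_mem_Icc_neg_of_mem_Icc (Ioo_subset_Icc_self hw)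
      (uIcc_of_le (zero_le_one' ℝ) ▸ ht))]
  have hweight : EqOn (fun w => (R ^ ((3:ℝ) / 2) - |w| ^ ((3:ℝ) / 2)) * (φ' w) ^ 2)
      (fun w => (R ^ ((3:ℝ) / 2) - |w| ^ ((3:ℝ) / 2)) * (g w) ^ 2) (Ioo (-R) R) :=
    fun w hw => by simp only [hgφ w (Ioo_subset_Icc_self hw)]
  rw [integral_const_mul, setIntegral_congr_fun measurableSet_Ioo hinner,
    setIntegral_congr_fun measurableSet_Ioo hweight, hIoo, hIoo,
    integral_abs_rpow_mul_integral_comp_mul (by fun_prop : Continuous fun x => g x ^ 2)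
      (by norm_num) hR.le]
  apply le_of_eq
  field_simp

/-- The key estimate (3k) in the proof of the weighted Nash-type inequality of
exponent two: the doubly-averaged weighted Dirichlet integral is controlled by
the weighted Dirichlet integral with weight `R^(3/2) - |w|^(3/2)`. -/
theorem averaged_dirichlet_bound
    (R : ℝ) (φ φ' : ℝ → ℝ) (hR : 0 < R)
    (hderiv : ∀ w ∈ Icc (-R) R, HasDerivAt φ (φ' w) w)
    (hcont : ContinuousOn φ' (Icc (-R) R)) :
    ∫ w in Ioo (-R) R, (1 / (2 * R))
        * ∫ t in Icc (0:ℝ) 1, (φ' (w * t)) ^ 2 * |w| ^ ((3:ℝ) / 2)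
      ≤ (1 / (3 * R))
        * ∫ w in Ioo (-R) R, (R ^ ((3:ℝ) / 2) - |w| ^ ((3:ℝ) / 2)) * (φ' w) ^ 2 :=
  averaged_dirichlet_bound_general R φ' hR hcont
end

section
/- Let φ : (−1,1) → [0,∞) be square-integrable. Then ∫_{−1}^1 φ(w) dw ≤ 5 · (1/(2√2))^{4/5} · (∫_{−1}^1 φ(w)² dw)^{2/5} · (∫_{−1}^1 w² φ(w) dw)^{1/5}. -/
/-!
For every `c, δ > 0` and `t ≥ 0` one has the pointwise bound
`t ≤ t² / (2c) + (c/2) · 1_{|w| ≤ δ} + w² t / δ²` (Young's inequality where `|w| ≤ δ`,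
and `1 ≤ w² / δ²` elsewhere). Integrating it against `φ` gives
`∫ φ ≤ A / (2c) + c δ + M / δ²` with `A = ∫ φ²` and `M = ∫ w² φ`, and optimizing over `c` and
`δ` yields `5 (2√2)^{-4/5} A^{2/5} M^{1/5}`. Degenerate values of `A` or `M` are handled by
perturbing them to `A + ε`, `M + ε` and letting `ε → 0`.
-/

open MeasureTheory Set Filter Topology

lemma MeasureTheory.AEStronglyMeasurable.of_sq_of_nonneg {α : Type*} [MeasurableSpace α]
    {μ : Measure α} {f : α → ℝ} (hf : 0 ≤ f) (hf2 : AEStronglyMeasurable (fun x => f x ^ 2) μ) :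
    AEStronglyMeasurable f μ :=
  (Real.continuous_sqrt.comp_aestronglyMeasurable hf2).congr
    (.of_forall fun x => Real.sqrt_sq (hf x))

lemma MeasureTheory.IntegrableOn.of_sq_of_nonneg {α : Type*} [MeasurableSpace α]
    {μ : Measure α} {s : Set α} {f : α → ℝ} (hs : μ s ≠ ⊤) (hf : 0 ≤ f)
    (hf2 : IntegrableOn (fun x => f x ^ 2) s μ) : IntegrableOn f s μ :=
  have : IsFiniteMeasure (μ.restrict s) := isFiniteMeasure_restrict.2 hs
  ((memLp_two_iff_integrable_sq (hf2.1.of_sq_of_nonneg hf)).2 hf2).integrable one_le_two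

lemma integrableOn_Ioo_sq_mul {f : ℝ → ℝ} (hf : IntegrableOn f (Ioo (-1) 1)) :
    IntegrableOn (fun w => w ^ 2 * f w) (Ioo (-1) 1) := by
  refine hf.bdd_mul (c := 1) (continuous_pow 2).aestronglyMeasurable ?_
  filter_upwards [ae_restrict_mem measurableSet_Ioo] with w ⟨hw₁, hw₂⟩
  rw [Real.norm_of_nonneg (sq_nonneg w)]
  nlinarith

lemma le_sq_div_add_indicator_add_mul_sq_div {c δ t : ℝ} (hc : 0 < c) (hδ : 0 < δ) (ht : 0 ≤ t)
    (w : ℝ) :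
    t ≤ t ^ 2 / (2 * c) + (Icc (-δ) δ).indicator (fun _ => c / 2) w + w ^ 2 * t / δ ^ 2 := by
  by_cases hw : w ∈ Icc (-δ) δ
  · have young : t ≤ t ^ 2 / (2 * c) + c / 2 := by
      rw [div_add_div _ _ (by positivity) two_ne_zero, le_div_iff₀ (by positivity)]
      nlinarith [sq_nonneg (t - c)]
    rw [indicator_of_mem hw]
    have : 0 ≤ w ^ 2 * t / δ ^ 2 := by positivity
    linarith
  · have hδw : δ ^ 2 ≤ w ^ 2 := by
      rw [mem_Icc, not_and_or, not_le, not_le] at hw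
      rw [sq_le_sq, abs_of_pos hδ, le_abs]
      rcases hw with hw | hw
      · right; linarith
      · left; linarith
    have : t ≤ w ^ 2 * t / δ ^ 2 := by
      rw [le_div_iff₀ (by positivity)]
      nlinarith
    rw [indicator_of_notMem hw]
    have : 0 ≤ t ^ 2 / (2 * c) := by positivity
    linarith

lemma setIntegral_le_sq_div_add_mul_add_moment_div {s : Set ℝ} {φ : ℝ → ℝ}
    (hφnonneg : ∀ w, 0 ≤ φ w) (hφ : IntegrableOn φ s)
    (hφ2 : IntegrableOn (fun w => φ w ^ 2) s) (hmom : IntegrableOn (fun w => w ^ 2 * φ w) s)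
    {c δ : ℝ} (hc : 0 < c) (hδ : 0 < δ) :
    ∫ w in s, φ w ≤ (∫ w in s, φ w ^ 2) / (2 * c) + c * δ + (∫ w in s, w ^ 2 * φ w) / δ ^ 2 := by
  set bump := (Icc (-δ) δ).indicator fun _ : ℝ => c / 2
  have hbump : Integrable bump :=
    (integrable_indicator_iff measurableSet_Icc).2 (integrableOn_const (by simp))
  have hbump_int : ∫ w in s, bump w ≤ c * δ := calc
    ∫ w in s, bump w ≤ ∫ w, bump w :=
      setIntegral_le_integral hbump
        (.of_forall fun w => indicator_nonneg (fun _ _ => by positivity) w)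
    _ = c * δ := by
      rw [integral_indicator_const _ measurableSet_Icc, Real.volume_real_Icc_of_le (by linarith)]
      simp only [smul_eq_mul]
      ring
  have hφ2c : IntegrableOn (fun w => φ w ^ 2 / (2 * c)) s := hφ2.div_const _
  have hmomδ : IntegrableOn (fun w => w ^ 2 * φ w / δ ^ 2) s := hmom.div_const _
  have hsum : IntegrableOn (fun w => φ w ^ 2 / (2 * c) + bump w) s := hφ2c.add hbump.integrableOn
  calc ∫ w in s, φ w
      ≤ ∫ w in s, (φ w ^ 2 / (2 * c) + bump w + w ^ 2 * φ w / δ ^ 2) :=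
        setIntegral_mono hφ (hsum.add hmomδ)
          fun w => le_sq_div_add_indicator_add_mul_sq_div hc hδ (hφnonneg w) w
    _ = (∫ w in s, φ w ^ 2) / (2 * c) + (∫ w in s, bump w)
          + (∫ w in s, w ^ 2 * φ w) / δ ^ 2 := by
      rw [integral_add hsum hmomδ, integral_add hφ2c hbump.integrableOn, integral_div,
        integral_div]
    _ ≤ _ := by linarith

lemma exists_div_add_mul_add_div_sq_eq {A M : ℝ} (hA : 0 < A) (hM : 0 < M) :
    ∃ c δ : ℝ, 0 < c ∧ 0 < δ ∧ A / (2 * c) + c * δ + M / δ ^ 2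
      = 5 * (1 / (2 * √2)) ^ ((4:ℝ) / 5) * A ^ ((2:ℝ) / 5) * M ^ ((1:ℝ) / 5) := by
  set x := A ^ ((1:ℝ) / 5)
  set y := M ^ ((1:ℝ) / 5)
  set z := (2:ℝ) ^ ((1:ℝ) / 5)
  have hx : 0 < x := by positivity
  have hy : 0 < y := by positivity
  have hz : 0 < z := by positivity
  have pow_fifth_root {a : ℝ} (ha : 0 ≤ a) (n : ℕ) : (a ^ ((1:ℝ) / 5)) ^ n = a ^ ((n:ℝ) / 5) := by
    rw [← Real.rpow_natCast, ← Real.rpow_mul ha]; ring_nf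
  have hA5 : A = x ^ 5 := by rw [pow_fifth_root hA.le]; norm_num
  have hM5 : M = y ^ 5 := by rw [pow_fifth_root hM.le]; norm_num
  have hz5 : z ^ 5 = 2 := by rw [pow_fifth_root zero_le_two]; norm_num
  have hA2 : A ^ ((2:ℝ) / 5) = x ^ 2 := by rw [pow_fifth_root hA.le]; norm_num
  have hK : (1 / (2 * √2)) ^ ((4:ℝ) / 5) = (z ^ 6)⁻¹ := by
    rw [pow_fifth_root zero_le_two, ← Real.rpow_neg zero_le_two, Real.sqrt_eq_rpow, one_div,
      ← Real.rpow_one_add' zero_le_two (by norm_num), ← Real.rpow_neg zero_le_two,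
      ← Real.rpow_mul zero_le_two]
    norm_num
  -- The minimizer: with `A = x⁵`, `M = y⁵`, `2 = z⁵` the three terms become
  -- `x² y / z`, `x² y / z` and `x² y / z⁶`, and `2 / z + 1 / z⁶ = 5 / z⁶`.
  refine ⟨x ^ 3 / (z ^ 4 * y), z ^ 3 * y ^ 2 / x, by positivity, by positivity, ?_⟩
  rw [hK, hA2, hA5, hM5]
  field_simp
  linear_combination (z ^ 5 + 4) * hz5

lemma le_of_forall_le_div_add_mul_add_div_sq {L A M : ℝ} (hA : 0 ≤ A) (hM : 0 ≤ M)
    (h : ∀ c δ : ℝ, 0 < c → 0 < δ → L ≤ A / (2 * c) + c * δ + M / δ ^ 2) :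
    L ≤ 5 * (1 / (2 * √2)) ^ ((4:ℝ) / 5) * A ^ ((2:ℝ) / 5) * M ^ ((1:ℝ) / 5) := by
  set bound := fun ε : ℝ =>
    5 * (1 / (2 * √2)) ^ ((4:ℝ) / 5) * (A + ε) ^ ((2:ℝ) / 5) * (M + ε) ^ ((1:ℝ) / 5)
  have hbound : Tendsto bound (𝓝[>] 0) (𝓝 (bound 0)) :=
    (Continuous.tendsto (by fun_prop (disch := norm_num)) 0).mono_left nhdsWithin_le_nhds
  suffices ∀ ε > 0, L ≤ bound ε by
    simpa only [bound, add_zero] using ge_of_tendsto hbound (eventually_nhdsWithin_of_forall this)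
  intro ε hε
  obtain ⟨c, δ, hc, hδ, hcδ⟩ := exists_div_add_mul_add_div_sq_eq (A := A + ε) (M := M + ε)
    (by linarith) (by linarith)
  calc L ≤ A / (2 * c) + c * δ + M / δ ^ 2 := h c δ hc hδ
    _ ≤ (A + ε) / (2 * c) + c * δ + (M + ε) / δ ^ 2 := by gcongr <;> linarith
    _ = bound ε := hcδ

/-- For a nonnegative square-integrable function on `(-1,1)`, the `L¹`-norm is
controlled by the `L²`-norm and the second moment (inequality (b5) of the paper). -/
theorem l1_bound_by_l2_and_second_moment
    (φ : ℝ → ℝ)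
    (hφnonneg : ∀ w, 0 ≤ φ w)
    (hφ2 : IntegrableOn (fun w => (φ w) ^ 2) (Ioo (-1:ℝ) 1)) :
    ∫ w in Ioo (-1:ℝ) 1, φ w
      ≤ 5 * (1 / (2 * Real.sqrt 2)) ^ ((4:ℝ) / 5)
        * (∫ w in Ioo (-1:ℝ) 1, (φ w) ^ 2) ^ ((2:ℝ) / 5)
        * (∫ w in Ioo (-1:ℝ) 1, w ^ 2 * φ w) ^ ((1:ℝ) / 5) := by
  have hφ : IntegrableOn φ (Ioo (-1:ℝ) 1) := hφ2.of_sq_of_nonneg (by simp) hφnonneg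
  exact le_of_forall_le_div_add_mul_add_div_sq
    (integral_nonneg fun w => sq_nonneg (φ w))
    (integral_nonneg fun w => mul_nonneg (sq_nonneg w) (hφnonneg w)) fun _ _ hc hδ =>
      setIntegral_le_sq_div_add_mul_add_moment_div hφnonneg hφ hφ2
        (integrableOn_Ioo_sq_mul hφ) hc hδ
end

section
/- Let α > 2 and let f : (−1,1) → [0,∞) be measurable with ∫_{−1}^1 f(w) dw and ∫_{−1}^1 w² f(w) dw finite, ∫_{−1}^1 w² f(w) dw > 0, and ∫_{−1}^1 w² H(w)^α f(w)^{α+1} dw finite. Set c_α = (2α/(α−2))^{α/(α+1)} and d_α = (2(α+1)/(c_α(α−2)))^{1/3}. Then ∫_{−1}^1 w² H(w)^α f(w)^{α+1} dw ≥ (∫_{−1}^1 H(w) f(w) dw)^{3α/2} / [ (c_α d_α + d_α^{−2})^{3α/2} · (∫_{−1}^1 w² f(w) dw)^{(α−2)/2} ]. -/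
/-!
Write `M = ∫ H f`, `E = ∫ w² f` and `I = ∫ w² H^α f^(α+1)` over `(-1, 1)`, and fix `s > 0`.
Where `|w| > s`, `H f ≤ f ≤ w² f / s²`, which contributes at most `E / s²`. Where `|w| ≤ s`, write
`H f = (|w|^(2/(α+1)) H f) · |w|^(-2/(α+1))` and apply Hölder with exponents `α + 1` and
`(α + 1) / α`: since `H ≤ 1` the first factor is controlled by `I`, and the second by
`∫_{-s}^{s} |w|^(-2/α) = (2α/(α-2)) s^((α-2)/α)`, finite because `α > 2`. Hence
`M ≤ c_α I^(1/(α+1)) s^((α-2)/(α+1)) + E / s²` for every `s > 0`. Taking `s = d_α r`, where `r`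
balances the two terms, and using `d_α ≥ 1` gives `M ≤ (c_α d_α + d_α⁻²) (E^(α-2) I²)^(1/(3α))`,
which is the claim raised to the power `3α/2`.
-/

open MeasureTheory Set

theorem one_sub_sq_nonneg_of_mem_Ioo {w : ℝ} (hw : w ∈ Ioo (-1 : ℝ) 1) : 0 ≤ 1 - w ^ 2 := by
  nlinarith [hw.1, hw.2]

theorem sq_mul_one_sub_sq_rpow_mul_rpow_nonneg {α w y : ℝ} (hw : w ∈ Ioo (-1 : ℝ) 1)
    (hy : 0 ≤ y) : 0 ≤ w ^ 2 * (1 - w ^ 2) ^ α * y ^ (α + 1) := by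
  have := one_sub_sq_nonneg_of_mem_Ioo hw
  positivity

theorem integral_abs_rpow_Icc {r s : ℝ} (hr : -1 < r) (hs : 0 ≤ s) :
    ∫ x in Icc (-s) s, |x| ^ r = 2 * (s ^ (r + 1) / (r + 1)) := by
  have hind : (Icc (-s) s).indicator (fun x => |x| ^ r)
      = fun x => (Iic s).indicator (fun y => y ^ r) |x| := by
    ext x
    simp only [indicator, mem_Icc, mem_Iic, ← abs_le]
  rw [← integral_indicator measurableSet_Icc, hind, integral_comp_abs,
    setIntegral_indicator measurableSet_Iic,
    Ioi_inter_Iic, ← intervalIntegral.integral_of_le hs, integral_rpow (.inl hr),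
    Real.zero_rpow (by linarith), sub_zero]

theorem integrableOn_abs_rpow_Icc {r s : ℝ} (hr : -1 < r) (hs : 0 < s) :
    IntegrableOn (fun x => |x| ^ r) (Icc (-s) s) := by
  refine Integrable.of_integral_ne_zero ?_
  rw [integral_abs_rpow_Icc hr hs.le]
  have : 0 < r + 1 := by linarith
  positivity

theorem setIntegral_abs_rpow_le {r s : ℝ} {B : Set ℝ} (hr : -1 < r) (hs : 0 < s)
    (hB : B ⊆ Icc (-s) s) : ∫ x in B, |x| ^ r ≤ 2 * (s ^ (r + 1) / (r + 1)) :=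
  (setIntegral_mono_set (integrableOn_abs_rpow_Icc hr hs) (.of_forall fun _ => by positivity)
    hB.eventuallyLE).trans_eq (integral_abs_rpow_Icc hr hs.le)

section Holder

variable {X : Type*} [MeasurableSpace X] {μ : Measure X}

theorem integrable_rpow_of_rpow_le {r : ℝ} {u U : X → ℝ} (hu₀ : 0 ≤ᵐ[μ] u)
    (hum : AEStronglyMeasurable u μ) (hU : Integrable U μ) (huU : ∀ᵐ x ∂μ, u x ^ r ≤ U x) :
    Integrable (fun x => u x ^ r) μ := by
  refine hU.mono' (hum.aemeasurable.pow_const r).aestronglyMeasurable ?_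
  filter_upwards [hu₀, huU] with x hx hxU
  rwa [Real.norm_of_nonneg (Real.rpow_nonneg hx r)]

theorem memLp_ofReal_of_integrable_rpow {r : ℝ} (hr : 0 < r) {u : X → ℝ} (hu₀ : 0 ≤ᵐ[μ] u)
    (hum : AEStronglyMeasurable u μ) (hu : Integrable (fun x => u x ^ r) μ) :
    MemLp u (ENNReal.ofReal r) μ := by
  refine (integrable_norm_rpow_iff hum (by simpa using hr) ENNReal.ofReal_ne_top).1 ?_
  rw [ENNReal.toReal_ofReal hr.le]
  refine hu.congr ?_
  filter_upwards [hu₀] with x hx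
  rw [Real.norm_of_nonneg hx]

theorem integral_mul_le_of_rpow_le {p q : ℝ} (hpq : p.HolderConjugate q) {f g F G : X → ℝ}
    (hf₀ : 0 ≤ᵐ[μ] f) (hg₀ : 0 ≤ᵐ[μ] g)
    (hfm : AEStronglyMeasurable f μ) (hgm : AEStronglyMeasurable g μ)
    (hF : Integrable F μ) (hG : Integrable G μ)
    (hfF : ∀ᵐ x ∂μ, f x ^ p ≤ F x) (hgG : ∀ᵐ x ∂μ, g x ^ q ≤ G x) :
    ∫ x, f x * g x ∂μ ≤ (∫ x, F x ∂μ) ^ (1 / p) * (∫ x, G x ∂μ) ^ (1 / q) := by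
  have hfp := integrable_rpow_of_rpow_le hf₀ hfm hF hfF
  have hgq := integrable_rpow_of_rpow_le hg₀ hgm hG hgG
  have hfpF := integral_mono_ae hfp hF hfF
  have hfp₀ := integral_nonneg_of_ae (hf₀.mono fun x hx => Real.rpow_nonneg hx p)
  have hgq₀ := integral_nonneg_of_ae (hg₀.mono fun x hx => Real.rpow_nonneg hx q)
  have := hpq.pos
  have := hpq.symm.pos
  calc ∫ x, f x * g x ∂μ ≤ (∫ x, f x ^ p ∂μ) ^ (1 / p) * (∫ x, g x ^ q ∂μ) ^ (1 / q) :=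
        integral_mul_le_Lp_mul_Lq_of_nonneg hpq hf₀ hg₀
          (memLp_ofReal_of_integrable_rpow hpq.pos hf₀ hfm hfp)
          (memLp_ofReal_of_integrable_rpow hpq.symm.pos hg₀ hgm hgq)
    _ ≤ (∫ x, F x ∂μ) ^ (1 / p) * (∫ x, G x ∂μ) ^ (1 / q) :=
      mul_le_mul (Real.rpow_le_rpow hfp₀ hfpF (by positivity))
        (Real.rpow_le_rpow hgq₀ (integral_mono_ae hgq hG hgG) (by positivity))
        (Real.rpow_nonneg hgq₀ _) (Real.rpow_nonneg (hfp₀.trans hfpF) _)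

end Holder

theorem abs_rpow_mul_one_sub_sq_mul_rpow_le {α w y : ℝ} (hα : 0 ≤ α)
    (hw : w ∈ Ioo (-1 : ℝ) 1) (hy : 0 ≤ y) :
    (|w| ^ (2 / (α + 1)) * ((1 - w ^ 2) * y)) ^ (α + 1) ≤
      w ^ 2 * (1 - w ^ 2) ^ α * y ^ (α + 1) := by
  have hH := one_sub_sq_nonneg_of_mem_Ioo hw
  rw [Real.mul_rpow (by positivity) (mul_nonneg hH hy), Real.mul_rpow hH hy,
    ← Real.rpow_mul (abs_nonneg w), div_mul_cancel₀ _ (by linarith), Real.rpow_two, sq_abs,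
    ← mul_assoc]
  have hHα : (1 - w ^ 2) ^ (α + 1) ≤ (1 - w ^ 2) ^ α :=
    Real.rpow_le_rpow_of_exponent_ge' hH (by nlinarith) hα (by linarith)
  exact mul_le_mul_of_nonneg_right (mul_le_mul_of_nonneg_left hHα (sq_nonneg w))
    (Real.rpow_nonneg hy _)

theorem setIntegral_one_sub_sq_mul_le_rpow_mul_rpow {α : ℝ} {f : ℝ → ℝ} {B : Set ℝ} (hα : 0 < α)
    (hB : MeasurableSet B) (hBI : B ⊆ Ioo (-1) 1) (hf₀ : ∀ w, 0 ≤ f w) (hfm : Measurable f)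
    (hfα : IntegrableOn (fun w => w ^ 2 * (1 - w ^ 2) ^ α * f w ^ (α + 1)) B)
    (hK : IntegrableOn (fun w => |w| ^ (-(2 / α))) B) :
    ∫ w in B, (1 - w ^ 2) * f w ≤
      (∫ w in B, w ^ 2 * (1 - w ^ 2) ^ α * f w ^ (α + 1)) ^ (1 / (α + 1)) *
        (∫ w in B, |w| ^ (-(2 / α))) ^ (α / (α + 1)) := by
  -- Hölder with exponents `α + 1` and `(α + 1) / α` applied to `(1 - w²) f = g * h`
  set g : ℝ → ℝ := fun w => |w| ^ (2 / (α + 1)) * ((1 - w ^ 2) * f w)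
  set h : ℝ → ℝ := fun w => |w| ^ (-(2 / (α + 1)))
  have hpq : (α + 1).HolderConjugate ((α + 1) / α) := by
    rw [Real.holderConjugate_iff_eq_conjExponent (by linarith)]
    ring
  have hgh : ∀ᵐ w ∂volume.restrict B, g w * h w = (1 - w ^ 2) * f w := by
    have hne : ∀ᵐ w : ℝ, w ≠ 0 := compl_mem_ae_iff.2 (measure_singleton 0)
    filter_upwards [ae_restrict_of_ae hne] with w hw
    rw [mul_right_comm, ← Real.rpow_add (abs_pos.2 hw), add_neg_cancel, Real.rpow_zero, one_mul]
  have hh_pow (w : ℝ) : h w ^ ((α + 1) / α) = |w| ^ (-(2 / α)) := by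
    rw [← Real.rpow_mul (abs_nonneg w)]
    field_simp
  rw [← integral_congr_ae hgh, show α / (α + 1) = 1 / ((α + 1) / α) from (one_div_div _ _).symm]
  refine integral_mul_le_of_rpow_le (f := g) (g := h) hpq ?_ (.of_forall fun w => by positivity)
    (by fun_prop) (by fun_prop) hfα hK ?_ (.of_forall fun w => (hh_pow w).le)
  all_goals refine (ae_restrict_iff' hB).2 (.of_forall fun w hw => ?_)
  · exact mul_nonneg (by positivity) (mul_nonneg (one_sub_sq_nonneg_of_mem_Ioo (hBI hw)) (hf₀ w))
  · exact abs_rpow_mul_one_sub_sq_mul_rpow_le hα.le (hBI hw) (hf₀ w)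

theorem setIntegral_Ioo_inter_Icc_one_sub_sq_mul_le {α s : ℝ} {f : ℝ → ℝ} (hα : 2 < α)
    (hs : 0 < s) (hf₀ : ∀ w, 0 ≤ f w) (hfm : Measurable f)
    (hfα : IntegrableOn (fun w => w ^ 2 * (1 - w ^ 2) ^ α * f w ^ (α + 1)) (Ioo (-1) 1)) :
    ∫ w in Ioo (-1) 1 ∩ Icc (-s) s, (1 - w ^ 2) * f w ≤
      (2 * α / (α - 2)) ^ (α / (α + 1)) *
        (∫ w in Ioo (-1) 1, w ^ 2 * (1 - w ^ 2) ^ α * f w ^ (α + 1)) ^ (1 / (α + 1)) *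
        s ^ ((α - 2) / (α + 1)) := by
  have hα₀ : 0 < α := by linarith
  have hB : MeasurableSet (Ioo (-1 : ℝ) 1 ∩ Icc (-s) s) :=
    measurableSet_Ioo.inter measurableSet_Icc
  have hr : -1 < -(2 / α) := by
    have : 2 / α < 1 := (div_lt_one hα₀).2 hα
    linarith
  have hbase₀ (w : ℝ) (hw : w ∈ Ioo (-1 : ℝ) 1) :=
    sq_mul_one_sub_sq_rpow_mul_rpow_nonneg (α := α) hw (hf₀ w)
  have hI := setIntegral_mono_set hfα ((ae_restrict_iff' measurableSet_Ioo).2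
    (.of_forall hbase₀)) (inter_subset_left (t := Icc (-s) s)).eventuallyLE
  have hI₀ := setIntegral_nonneg (μ := volume) hB fun w hw => hbase₀ w hw.1
  have hK : ∫ w in Ioo (-1) 1 ∩ Icc (-s) s, |w| ^ (-(2 / α)) ≤
      2 * α / (α - 2) * s ^ ((α - 2) / α) := by
    refine (setIntegral_abs_rpow_le hr hs inter_subset_right).trans_eq ?_
    rw [show -(2 / α) + 1 = (α - 2) / α by field_simp; ring]
    field_simp
  have hK₀ := setIntegral_nonneg (μ := volume) hB fun w _ =>
    Real.rpow_nonneg (abs_nonneg w) (-(2 / α))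
  calc ∫ w in Ioo (-1) 1 ∩ Icc (-s) s, (1 - w ^ 2) * f w
      ≤ (∫ w in Ioo (-1) 1 ∩ Icc (-s) s, w ^ 2 * (1 - w ^ 2) ^ α * f w ^ (α + 1)) ^
          (1 / (α + 1)) * (∫ w in Ioo (-1) 1 ∩ Icc (-s) s, |w| ^ (-(2 / α))) ^ (α / (α + 1)) :=
        setIntegral_one_sub_sq_mul_le_rpow_mul_rpow hα₀ hB inter_subset_left hf₀ hfm
          (hfα.mono_set inter_subset_left)
          ((integrableOn_abs_rpow_Icc hr hs).mono_set inter_subset_right)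
    _ ≤ (∫ w in Ioo (-1) 1, w ^ 2 * (1 - w ^ 2) ^ α * f w ^ (α + 1)) ^ (1 / (α + 1)) *
        (2 * α / (α - 2) * s ^ ((α - 2) / α)) ^ (α / (α + 1)) :=
      mul_le_mul (Real.rpow_le_rpow hI₀ hI (by positivity))
        (Real.rpow_le_rpow hK₀ hK (by positivity))
        (Real.rpow_nonneg hK₀ _) (Real.rpow_nonneg (hI₀.trans hI) _)
    _ = _ := by
      rw [Real.mul_rpow (by positivity) (by positivity), ← Real.rpow_mul hs.le,
        show (α - 2) / α * (α / (α + 1)) = (α - 2) / (α + 1) by field_simp]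
      ring

theorem setIntegral_sdiff_Icc_one_sub_sq_mul_le {S : Set ℝ} {f : ℝ → ℝ} {s : ℝ}
    (hS : MeasurableSet S) (hs : 0 < s) (hf₀ : ∀ w, 0 ≤ f w)
    (hHf : IntegrableOn (fun w => (1 - w ^ 2) * f w) S)
    (hf₂ : IntegrableOn (fun w => w ^ 2 * f w) S) :
    ∫ w in S \ Icc (-s) s, (1 - w ^ 2) * f w ≤ (∫ w in S, w ^ 2 * f w) / s ^ 2 := by
  rw [← integral_div]
  refine (setIntegral_mono_on (hHf.mono_set sdiff_subset)
    ((hf₂.mono_set sdiff_subset).div_const _) (hS.diff measurableSet_Icc) fun w hw => ?_).trans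
    (setIntegral_mono_set (hf₂.div_const _) (.of_forall fun w => by have := hf₀ w; positivity)
      sdiff_subset.eventuallyLE)
  have hsw : s ^ 2 ≤ w ^ 2 := by
    have : s < |w| := not_le.1 fun h => hw.2 (abs_le.1 h)
    simpa only [sq_abs] using pow_le_pow_left₀ hs.le this.le 2
  rw [le_div_iff₀ (by positivity)]
  nlinarith [mul_le_mul_of_nonneg_right hsw (hf₀ w),
    mul_nonneg (mul_nonneg (sq_nonneg w) (sq_nonneg s)) (hf₀ w)]

theorem integral_one_sub_sq_mul_le {α s : ℝ} {f : ℝ → ℝ} (hα : 2 < α) (hs : 0 < s)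
    (hf₀ : ∀ w, 0 ≤ f w) (hfm : Measurable f) (hf : IntegrableOn f (Ioo (-1) 1))
    (hf₂ : IntegrableOn (fun w => w ^ 2 * f w) (Ioo (-1) 1))
    (hfα : IntegrableOn (fun w => w ^ 2 * (1 - w ^ 2) ^ α * f w ^ (α + 1)) (Ioo (-1) 1)) :
    ∫ w in Ioo (-1) 1, (1 - w ^ 2) * f w ≤
      (2 * α / (α - 2)) ^ (α / (α + 1)) *
        (∫ w in Ioo (-1) 1, w ^ 2 * (1 - w ^ 2) ^ α * f w ^ (α + 1)) ^ (1 / (α + 1)) *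
        s ^ ((α - 2) / (α + 1)) + (∫ w in Ioo (-1) 1, w ^ 2 * f w) / s ^ 2 := by
  have hHf : IntegrableOn (fun w => (1 - w ^ 2) * f w) (Ioo (-1) 1) :=
    (hf.sub hf₂).congr_fun (fun w _ => by simp only [Pi.sub_apply]; ring) measurableSet_Ioo
  rw [← integral_inter_add_sdiff measurableSet_Icc hHf]
  exact add_le_add (setIntegral_Ioo_inter_Icc_one_sub_sq_mul_le hα hs hf₀ hfm hfα)
    (setIntegral_sdiff_Icc_one_sub_sq_mul_le measurableSet_Ioo hs hf₀ hHf hf₂)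

theorem rpow_le_of_forall_le_mul_rpow_add_div_sq {β c d E J M : ℝ} (hβ : -2 < β) (hβ₁ : β ≤ 1)
    (hc : 0 ≤ c) (hd : 1 ≤ d) (hE : 0 < E) (hJ : 0 ≤ J) (hM : 0 ≤ M)
    (h : ∀ s > 0, M ≤ c * J * s ^ β + E / s ^ 2) :
    M ^ (β + 2) ≤ (c * d + d⁻¹ ^ 2) ^ (β + 2) * E ^ β * J ^ 2 := by
  have hβ₂ : 0 < β + 2 := by linarith
  rcases hJ.eq_or_lt with rfl | hJ
  · have hM₀ : M ≤ 0 := by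
      refine ge_of_tendsto
        ((tendsto_const_nhds (x := E)).div_atTop (Filter.tendsto_pow_atTop two_ne_zero))
        (Filter.eventually_gt_atTop 0 |>.mono fun s hs => ?_)
      simpa using h s hs
    rw [le_antisymm hM₀ hM, Real.zero_rpow hβ₂.ne']
    simp
  -- `r` equalizes the two terms (`J r^β = E / r²`); the bound is then used at `s = d * r`
  set r := (E / J) ^ (β + 2)⁻¹
  have hr : 0 < r := by positivity
  have hEr : E / r ^ 2 = J * r ^ β := by
    have : r ^ (β + 2) = E / J := Real.rpow_inv_rpow (by positivity) hβ₂.ne'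
    rw [Real.rpow_add hr, Real.rpow_two, eq_div_iff hJ.ne'] at this
    rw [div_eq_iff (by positivity)]
    linear_combination -this
  have hM' : M ≤ (c * d + d⁻¹ ^ 2) * (J * r ^ β) :=
    calc M ≤ c * J * (d * r) ^ β + E / (d * r) ^ 2 := h _ (by positivity)
      _ = c * d ^ β * (J * r ^ β) + d⁻¹ ^ 2 * (E / r ^ 2) := by
        rw [Real.mul_rpow (by positivity) hr.le]
        field_simp
      _ ≤ c * d * (J * r ^ β) + d⁻¹ ^ 2 * (J * r ^ β) := by
        rw [hEr]
        gcongr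
        exact Real.rpow_le_self_of_one_le hd hβ₁
      _ = (c * d + d⁻¹ ^ 2) * (J * r ^ β) := by ring
  have ht : (J * r ^ β) ^ (β + 2) = E ^ β * J ^ 2 := by
    rw [Real.rpow_add (by positivity), Real.rpow_two]
    nth_rw 1 [← hEr]
    rw [Real.div_rpow hE.le (by positivity), ← Real.rpow_natCast_mul hr.le,
      mul_comm ((2 : ℕ) : ℝ), Real.rpow_mul_natCast hr.le]
    field_simp
  calc M ^ (β + 2) ≤ ((c * d + d⁻¹ ^ 2) * (J * r ^ β)) ^ (β + 2) := by gcongr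
    _ = (c * d + d⁻¹ ^ 2) ^ (β + 2) * E ^ β * J ^ 2 := by
      rw [Real.mul_rpow (by positivity) (by positivity), ht, mul_assoc]

theorem rpow_div_le_of_forall_le_mul_rpow_add_div_sq {α c d E I M : ℝ} (hα : 2 < α)
    (hc : 0 ≤ c) (hd : 1 ≤ d) (hE : 0 < E) (hI : 0 ≤ I) (hM : 0 ≤ M)
    (h : ∀ s > 0, M ≤ c * I ^ (1 / (α + 1)) * s ^ ((α - 2) / (α + 1)) + E / s ^ 2) :
    M ^ (3 * α / 2) / ((c * d + d⁻¹ ^ 2) ^ (3 * α / 2) * E ^ ((α - 2) / 2)) ≤ I := by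
  have hα₁ : 0 < α + 1 := by linarith
  have key := rpow_le_of_forall_le_mul_rpow_add_div_sq (by rw [lt_div_iff₀ hα₁]; linarith)
    ((div_le_one hα₁).2 (by linarith)) hc hd hE (by positivity) hM h
  rw [div_le_iff₀ (by positivity)]
  calc M ^ (3 * α / 2) = (M ^ ((α - 2) / (α + 1) + 2)) ^ ((α + 1) / 2) := by
        rw [← Real.rpow_mul hM]
        congr 1
        field_simp
        ring
    _ ≤ ((c * d + d⁻¹ ^ 2) ^ ((α - 2) / (α + 1) + 2) * E ^ ((α - 2) / (α + 1)) *
        (I ^ (1 / (α + 1))) ^ 2) ^ ((α + 1) / 2) := by gcongr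
    _ = I * ((c * d + d⁻¹ ^ 2) ^ (3 * α / 2) * E ^ ((α - 2) / 2)) := by
      rw [← Real.rpow_mul_natCast hI, Real.mul_rpow (by positivity) (by positivity),
        Real.mul_rpow (by positivity) (by positivity), ← Real.rpow_mul (by positivity),
        ← Real.rpow_mul hE.le, ← Real.rpow_mul hI,
        show ((α - 2) / (α + 1) + 2) * ((α + 1) / 2) = 3 * α / 2 by field_simp; ring,
        show (α - 2) / (α + 1) * ((α + 1) / 2) = (α - 2) / 2 by field_simp,
        show 1 / (α + 1) * (2 : ℕ) * ((α + 1) / 2) = 1 by push_cast; field_simp, Real.rpow_one]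
      ring

theorem one_le_two_mul_add_one_div_rpow_mul_sub_two {α : ℝ} (hα : 2 < α) :
    1 ≤ 2 * (α + 1) / ((2 * α / (α - 2)) ^ (α / (α + 1)) * (α - 2)) := by
  have hα₂ : 0 < α - 2 := by linarith
  rw [one_le_div (by positivity)]
  calc (2 * α / (α - 2)) ^ (α / (α + 1)) * (α - 2) ≤ 2 * α / (α - 2) * (α - 2) := by
        gcongr
        refine Real.rpow_le_self_of_one_le ((one_le_div hα₂).2 (by linarith)) ?_
        exact (div_le_one (by linarith)).2 (by linarith)
    _ ≤ 2 * (α + 1) := by rw [div_mul_cancel₀ _ hα₂.ne']; linarith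

/-- Lemma 3.1 (`prop:1`) of the paper: lower bound for the weighted
`(α+1)`-moment `∫ w² H(w)^α f(w)^(α+1) dw` in terms of `∫ H f dw` and the
second moment, where `H(w) = 1 - w²`. -/
theorem weighted_moment_lower_bound
    (α : ℝ) (f : ℝ → ℝ) (c d : ℝ)
    (hα : 2 < α)
    (hc : c = (2 * α / (α - 2)) ^ (α / (α + 1)))
    (hd : d = (2 * (α + 1) / (c * (α - 2))) ^ ((1:ℝ) / 3))
    (hfnonneg : ∀ w, 0 ≤ f w)
    (hfmeas : Measurable f)
    (hf1 : IntegrableOn f (Ioo (-1:ℝ) 1))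
    (hf2 : IntegrableOn (fun w => w ^ 2 * f w) (Ioo (-1:ℝ) 1))
    (hEpos : 0 < ∫ w in Ioo (-1:ℝ) 1, w ^ 2 * f w)
    (hfα : IntegrableOn (fun w => w ^ 2 * (1 - w ^ 2) ^ α * f w ^ (α + 1)) (Ioo (-1:ℝ) 1)) :
    (∫ w in Ioo (-1:ℝ) 1, (1 - w ^ 2) * f w) ^ (3 * α / 2)
        / ((c * d + d⁻¹ ^ 2) ^ (3 * α / 2)
            * (∫ w in Ioo (-1:ℝ) 1, w ^ 2 * f w) ^ ((α - 2) / 2))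
      ≤ ∫ w in Ioo (-1:ℝ) 1, w ^ 2 * (1 - w ^ 2) ^ α * f w ^ (α + 1) := by
  have hc₀ : 0 < c := hc ▸ by positivity
  have hd₁ : 1 ≤ d :=
    hd ▸ Real.one_le_rpow (hc ▸ one_le_two_mul_add_one_div_rpow_mul_sub_two hα) (by norm_num)
  have hI₀ : 0 ≤ ∫ w in Ioo (-1:ℝ) 1, w ^ 2 * (1 - w ^ 2) ^ α * f w ^ (α + 1) :=
    setIntegral_nonneg measurableSet_Ioo fun w hw =>
      sq_mul_one_sub_sq_rpow_mul_rpow_nonneg hw (hfnonneg w)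
  have hM₀ : 0 ≤ ∫ w in Ioo (-1:ℝ) 1, (1 - w ^ 2) * f w :=
    setIntegral_nonneg measurableSet_Ioo fun w hw =>
      mul_nonneg (one_sub_sq_nonneg_of_mem_Ioo hw) (hfnonneg w)
  refine rpow_div_le_of_forall_le_mul_rpow_add_div_sq hα hc₀.le hd₁ hEpos hI₀ hM₀ fun s hs => ?_
  exact hc ▸ integral_one_sub_sq_mul_le hα hs hfnonneg hfmeas hf1 hf2 hfα
end

section
/- Let α > 2 and let f : (−1,1) → [0,∞) be measurable with all integrals below finite. Then for every R > 0, ∫_{−1}^1 H(w)^{α/(α+1)} f(w) dw ≤ c_α R^{(α−2)/(α+1)} (∫_{−1}^1 w² H(w)^α f(w)^{α+1} dw)^{1/(α+1)} + (1/R²) ∫_{−1}^1 w² H(w)^{α/(α+1)} f(w) dw, where c_α = (2α/(α−2))^{α/(α+1)}. -/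
open MeasureTheory Set

/-!
With `g = H^(α/(α+1)) f` one has `w² g^(α+1) = w² H^α f^(α+1)`, so the claim is a statement
about a nonnegative `g` on `(-1, 1)`. Split at `|w| = r := min R 1`. For `|w| ≥ r` we have
`|w| ≥ R`, so `g ≤ w² g / R²`, which gives the second term. On `(-r, r)` write
`g = (|w|^(2/(α+1)) g) · |w|^(-2/(α+1))` and apply Hölder with exponents `α + 1` and
`(α + 1)/α`: the first factor gives the weighted moment, and the second is finite because
`α > 2` makes `|w|^(-2/α)` integrable, with
`∫_{-r}^{r} |w|^(-2/α) = (2α/(α-2)) r^((α-2)/α)`;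
raising this to the power `α/(α+1)` produces `c_α r^((α-2)/(α+1)) ≤ c_α R^((α-2)/(α+1))`.
-/

lemma memLp_ofReal_of_integrable_rpow_s10 {X : Type*} [MeasurableSpace X] {μ : Measure X}
    {p : ℝ} (hp : 0 < p) {g : X → ℝ} (hg : AEStronglyMeasurable g μ) (hg0 : 0 ≤ᵐ[μ] g)
    (hint : Integrable (fun x => g x ^ p) μ) : MemLp g (ENNReal.ofReal p) μ := by
  refine (integrable_norm_rpow_iff hg (by simpa using hp) ENNReal.ofReal_ne_top).1 ?_
  rw [ENNReal.toReal_ofReal hp.le]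
  exact hint.congr (hg0.mono fun x hx => by simp only [Real.norm_of_nonneg hx])

lemma intervalIntegrable_abs_rpow_zero {s : ℝ} (hs : -1 < s) {r : ℝ} (hr : 0 ≤ r) :
    IntervalIntegrable (fun x : ℝ => |x| ^ s) volume 0 r := by
  refine (intervalIntegral.intervalIntegrable_rpow' hs).congr_ae ?_
  rw [uIoc_of_le hr]
  exact ae_restrict_of_forall_mem measurableSet_Ioc fun x hx => by simp only [abs_of_pos hx.1]

lemma integral_abs_rpow_zero {s : ℝ} (hs : -1 < s) {r : ℝ} (hr : 0 ≤ r) :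
    ∫ x in (0 : ℝ)..r, |x| ^ s = r ^ (s + 1) / (s + 1) := by
  rw [intervalIntegral.integral_congr (g := fun x : ℝ => x ^ s) fun x hx => by
      rw [uIcc_of_le hr] at hx; simp only [abs_of_nonneg hx.1],
    integral_rpow (Or.inl hs), Real.zero_rpow (by linarith), sub_zero]

lemma integrableOn_abs_rpow_Ioo {s : ℝ} (hs : -1 < s) (r : ℝ) :
    IntegrableOn (fun x : ℝ => |x| ^ s) (Ioo (-r) r) := by
  rcases le_or_gt r 0 with hr | hr
  · simp [Ioo_eq_empty (by linarith : ¬ -r < r)]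
  have h0r := intervalIntegrable_abs_rpow_zero hs hr.le
  have hr0 : IntervalIntegrable (fun x : ℝ => |x| ^ s) volume (-r) 0 := by
    simpa using (h0r.comp_sub_left 0).symm
  exact (intervalIntegrable_iff_integrableOn_Ioo_of_le (by linarith)).mp (hr0.trans h0r)

lemma integral_abs_rpow_Ioo {s : ℝ} (hs : -1 < s) {r : ℝ} (hr : 0 ≤ r) :
    ∫ x in Ioo (-r) r, |x| ^ s = 2 * r ^ (s + 1) / (s + 1) := by
  have h0r := intervalIntegrable_abs_rpow_zero hs hr
  have hr0 : IntervalIntegrable (fun x : ℝ => |x| ^ s) volume (-r) 0 := by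
    simpa using (h0r.comp_sub_left 0).symm
  have hsymm : ∫ x in (-r)..0, |x| ^ s = ∫ x in (0 : ℝ)..r, |x| ^ s := by
    simpa using (intervalIntegral.integral_comp_neg (a := 0) (b := r) fun x : ℝ => |x| ^ s).symm
  rw [← integral_Ioc_eq_integral_Ioo, ← intervalIntegral.integral_of_le (by linarith),
    ← intervalIntegral.integral_add_adjacent_intervals hr0 h0r, hsymm,
    integral_abs_rpow_zero hs hr]
  ring

lemma neg_one_lt_neg_two_div {a : ℝ} (ha : 2 < a) : -1 < -(2 / a) := by
  have : 2 / a < 1 := (div_lt_one (by linarith)).2 ha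
  linarith

lemma integral_abs_rpow_neg_two_div_Ioo_rpow {a : ℝ} (ha : 2 < a) {r : ℝ} (hr : 0 ≤ r) :
    (∫ w in Ioo (-r) r, |w| ^ (-(2 / a))) ^ (a / (a + 1))
      = (2 * a / (a - 2)) ^ (a / (a + 1)) * r ^ ((a - 2) / (a + 1)) := by
  have ha0 : 0 < a := by linarith
  have hexp : -(2 / a) + 1 = (a - 2) / a := by field_simp; ring
  have hval : 2 * r ^ ((a - 2) / a) / ((a - 2) / a) = 2 * a / (a - 2) * r ^ ((a - 2) / a) := by
    field_simp
  rw [integral_abs_rpow_Ioo (neg_one_lt_neg_two_div ha) hr, hexp, hval,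
    Real.mul_rpow (by positivity) (by positivity), ← Real.rpow_mul hr]
  congr 2
  field_simp

lemma setIntegral_Ioo_le_of_weighted_moment {a : ℝ} (ha : 2 < a) {r : ℝ} (hr : 0 < r)
    {g : ℝ → ℝ} (hg : Measurable g) (hg0 : ∀ w ∈ Ioo (-r) r, 0 ≤ g w)
    (hint : IntegrableOn (fun w => w ^ 2 * g w ^ (a + 1)) (Ioo (-r) r)) :
    ∫ w in Ioo (-r) r, g w ≤ (2 * a / (a - 2)) ^ (a / (a + 1)) * r ^ ((a - 2) / (a + 1))
      * (∫ w in Ioo (-r) r, w ^ 2 * g w ^ (a + 1)) ^ (1 / (a + 1)) := by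
  have ha0 : 0 < a := by linarith
  have hpq : (a + 1).HolderConjugate ((a + 1) / a) :=
    (Real.holderConjugate_iff_eq_conjExponent (by linarith)).2 (by rw [add_sub_cancel_right])
  have hT : MeasurableSet (Ioo (-r) r) := measurableSet_Ioo
  set Φ : ℝ → ℝ := fun w => |w| ^ (2 / (a + 1)) * g w with hΦ
  set Ψ : ℝ → ℝ := fun w => |w| ^ (-(2 / (a + 1))) with hΨ
  have hΦ0 : 0 ≤ᵐ[volume.restrict (Ioo (-r) r)] Φ :=
    ae_restrict_of_forall_mem hT fun w hw => mul_nonneg (by positivity) (hg0 w hw)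
  have hΨ0 : 0 ≤ᵐ[volume.restrict (Ioo (-r) r)] Ψ := ae_of_all _ fun w => by positivity
  have hΦp : ∀ w ∈ Ioo (-r) r, Φ w ^ (a + 1) = w ^ 2 * g w ^ (a + 1) := fun w hw => by
    rw [hΦ, Real.mul_rpow (by positivity) (hg0 w hw), ← Real.rpow_mul (abs_nonneg w),
      div_mul_cancel₀ _ (by linarith), Real.rpow_two, sq_abs]
  have hΨq : ∀ w, Ψ w ^ ((a + 1) / a) = |w| ^ (-(2 / a)) := fun w => by
    rw [hΨ, ← Real.rpow_mul (abs_nonneg w)]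
    congr 1
    field_simp
  have hΦΨ : ∀ w, w ≠ 0 → Φ w * Ψ w = g w := fun w hw => by
    rw [hΦ, hΨ, mul_right_comm, ← Real.rpow_add (abs_pos.mpr hw), add_neg_cancel,
      Real.rpow_zero, one_mul]
  have hΦL : MemLp Φ (ENNReal.ofReal (a + 1)) (volume.restrict (Ioo (-r) r)) := by
    refine memLp_ofReal_of_integrable_rpow_s10 (by linarith) (by fun_prop) hΦ0 ?_
    exact hint.congr (ae_restrict_of_forall_mem hT fun w hw => (hΦp w hw).symm)
  have hΨL : MemLp Ψ (ENNReal.ofReal ((a + 1) / a)) (volume.restrict (Ioo (-r) r)) := by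
    refine memLp_ofReal_of_integrable_rpow_s10 (by positivity) (by fun_prop) hΨ0 ?_
    simp only [hΨq]
    exact integrableOn_abs_rpow_Ioo (neg_one_lt_neg_two_div ha) r
  have hΨnorm : (∫ w in Ioo (-r) r, Ψ w ^ ((a + 1) / a)) ^ (1 / ((a + 1) / a))
      = (2 * a / (a - 2)) ^ (a / (a + 1)) * r ^ ((a - 2) / (a + 1)) := by
    simpa only [hΨq, one_div_div] using integral_abs_rpow_neg_two_div_Ioo_rpow ha hr.le
  calc ∫ w in Ioo (-r) r, g w = ∫ w in Ioo (-r) r, Φ w * Ψ w :=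
        integral_congr_ae <| ae_restrict_of_ae <|
          (volume.ae_ne 0).mono fun w hw => (hΦΨ w hw).symm
    _ ≤ _ := integral_mul_le_Lp_mul_Lq_of_nonneg hpq hΦ0 hΨ0 hΦL hΨL
    _ = _ := by rw [setIntegral_congr_fun hT hΦp, hΨnorm, mul_comm]

lemma setIntegral_le_one_div_sq_mul_setIntegral_sq_mul {s t : Set ℝ} (hs : MeasurableSet s)
    (ht : MeasurableSet t) (hts : t ⊆ s) {R : ℝ} (hR : 0 < R) (hRt : ∀ w ∈ t, R ≤ |w|)
    {g : ℝ → ℝ} (hg0 : ∀ w ∈ s, 0 ≤ g w) (hg : IntegrableOn g t)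
    (hg2 : IntegrableOn (fun w => w ^ 2 * g w) s) :
    ∫ w in t, g w ≤ 1 / R ^ 2 * ∫ w in s, w ^ 2 * g w := by
  have hpt : ∀ w ∈ t, g w ≤ 1 / R ^ 2 * (w ^ 2 * g w) := fun w hw => by
    have hRw : R ^ 2 ≤ w ^ 2 := by simpa only [sq_abs] using pow_le_pow_left₀ hR.le (hRt w hw) 2
    rw [one_div_mul_eq_div, le_div_iff₀ (by positivity)]
    nlinarith [hg0 w (hts hw)]
  calc ∫ w in t, g w ≤ ∫ w in t, 1 / R ^ 2 * (w ^ 2 * g w) :=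
        setIntegral_mono_on hg ((hg2.mono_set hts).const_mul _) ht hpt
    _ = 1 / R ^ 2 * ∫ w in t, w ^ 2 * g w := integral_const_mul _ _
    _ ≤ 1 / R ^ 2 * ∫ w in s, w ^ 2 * g w := by
        refine mul_le_mul_of_nonneg_left ?_ (by positivity)
        exact setIntegral_mono_set hg2
          (ae_restrict_of_forall_mem hs fun w hw => mul_nonneg (sq_nonneg w) (hg0 w hw))
          hts.eventuallyLE

theorem setIntegral_le_rpow_moment_add_sq_moment {a : ℝ} (ha : 2 < a) {g : ℝ → ℝ}
    (hg : Measurable g) (hg0 : ∀ w ∈ Ioo (-1 : ℝ) 1, 0 ≤ g w)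
    (hg1 : IntegrableOn g (Ioo (-1) 1))
    (hg2 : IntegrableOn (fun w => w ^ 2 * g w) (Ioo (-1) 1))
    (hga : IntegrableOn (fun w => w ^ 2 * g w ^ (a + 1)) (Ioo (-1) 1)) {R : ℝ} (hR : 0 < R) :
    ∫ w in Ioo (-1 : ℝ) 1, g w
      ≤ (2 * a / (a - 2)) ^ (a / (a + 1)) * R ^ ((a - 2) / (a + 1))
          * (∫ w in Ioo (-1 : ℝ) 1, w ^ 2 * g w ^ (a + 1)) ^ (1 / (a + 1))
        + 1 / R ^ 2 * ∫ w in Ioo (-1 : ℝ) 1, w ^ 2 * g w := by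
  set r := min R 1
  have hr0 : 0 < r := lt_min hR one_pos
  have hsub : Ioo (-r) r ⊆ Ioo (-1 : ℝ) 1 :=
    Ioo_subset_Ioo (neg_le_neg (min_le_right _ _)) (min_le_right _ _)
  have hRt : ∀ w ∈ Ioo (-1 : ℝ) 1 \ Ioo (-r) r, R ≤ |w| := fun w ⟨hw1, hwr⟩ => by
    have h1 : |w| < 1 := abs_lt.2 hw1
    have h2 : r ≤ |w| := not_lt.1 fun h => hwr (abs_lt.1 h)
    rcases min_le_iff.1 h2 with h | h
    · exact h
    · linarith
  have hmoment0 : ∀ w ∈ Ioo (-1 : ℝ) 1, 0 ≤ w ^ 2 * g w ^ (a + 1) := fun w hw =>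
    mul_nonneg (sq_nonneg w) (Real.rpow_nonneg (hg0 w hw) _)
  have hinner : ∫ w in Ioo (-r) r, g w
      ≤ (2 * a / (a - 2)) ^ (a / (a + 1)) * R ^ ((a - 2) / (a + 1))
          * (∫ w in Ioo (-1 : ℝ) 1, w ^ 2 * g w ^ (a + 1)) ^ (1 / (a + 1)) := by
    refine (setIntegral_Ioo_le_of_weighted_moment ha hr0 hg (fun w hw => hg0 w (hsub hw))
      (hga.mono_set hsub)).trans ?_
    have hinner0 : 0 ≤ ∫ w in Ioo (-r) r, w ^ 2 * g w ^ (a + 1) :=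
      setIntegral_nonneg measurableSet_Ioo fun w hw => hmoment0 w (hsub hw)
    gcongr
    case h₁ => exact min_le_left R 1
    case hf => exact ae_restrict_of_forall_mem measurableSet_Ioo hmoment0
  have houter : ∫ w in Ioo (-1 : ℝ) 1 \ Ioo (-r) r, g w
      ≤ 1 / R ^ 2 * ∫ w in Ioo (-1 : ℝ) 1, w ^ 2 * g w :=
    setIntegral_le_one_div_sq_mul_setIntegral_sq_mul measurableSet_Ioo
      (measurableSet_Ioo.diff measurableSet_Ioo) sdiff_subset hR hRt hg0
      (hg1.mono_set sdiff_subset) hg2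
  rw [← integral_inter_add_sdiff measurableSet_Ioo hg1, inter_eq_right.mpr hsub]
  exact add_le_add hinner houter

/-- Inequality (eq:inR) of the paper: for every `R > 0`, a truncation bound for
`∫ H^(α/(α+1)) f dw` in terms of the weighted `(α+1)`-moment and the weighted
second moment, where `H(w) = 1 - w²` and `c_α = (2α/(α-2))^(α/(α+1))`. -/
theorem truncation_bound_alpha
    (α : ℝ) (f : ℝ → ℝ) (c : ℝ)
    (hα : 2 < α)
    (hc : c = (2 * α / (α - 2)) ^ (α / (α + 1)))
    (hfnonneg : ∀ w, 0 ≤ f w)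
    (hfmeas : Measurable f)
    (hf1 : IntegrableOn (fun w => (1 - w ^ 2) ^ (α / (α + 1)) * f w) (Ioo (-1:ℝ) 1))
    (hf2 : IntegrableOn (fun w => w ^ 2 * (1 - w ^ 2) ^ (α / (α + 1)) * f w) (Ioo (-1:ℝ) 1))
    (hfα : IntegrableOn (fun w => w ^ 2 * (1 - w ^ 2) ^ α * f w ^ (α + 1)) (Ioo (-1:ℝ) 1)) :
    ∀ R : ℝ, 0 < R →
      ∫ w in Ioo (-1:ℝ) 1, (1 - w ^ 2) ^ (α / (α + 1)) * f w
        ≤ c * R ^ ((α - 2) / (α + 1))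
            * (∫ w in Ioo (-1:ℝ) 1, w ^ 2 * (1 - w ^ 2) ^ α * f w ^ (α + 1)) ^ (1 / (α + 1))
          + (1 / R ^ 2)
            * ∫ w in Ioo (-1:ℝ) 1, w ^ 2 * (1 - w ^ 2) ^ (α / (α + 1)) * f w := by
  intro R hR
  have hH : ∀ w ∈ Ioo (-1 : ℝ) 1, 0 ≤ 1 - w ^ 2 := fun w hw => by nlinarith [hw.1, hw.2]
  have hmoment : ∀ w ∈ Ioo (-1 : ℝ) 1, w ^ 2 * ((1 - w ^ 2) ^ (α / (α + 1)) * f w) ^ (α + 1)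
      = w ^ 2 * (1 - w ^ 2) ^ α * f w ^ (α + 1) := fun w hw => by
    rw [Real.mul_rpow (Real.rpow_nonneg (hH w hw) _) (hfnonneg w), ← Real.rpow_mul (hH w hw),
      div_mul_cancel₀ _ (by linarith), mul_assoc]
  have h := setIntegral_le_rpow_moment_add_sq_moment hα (by fun_prop)
    (fun w hw => mul_nonneg (Real.rpow_nonneg (hH w hw) _) (hfnonneg w)) hf1
    (by simpa only [mul_assoc] using hf2)
    (hfα.congr_fun (fun w hw => (hmoment w hw).symm) measurableSet_Ioo) hR
  rw [setIntegral_congr_fun measurableSet_Ioo hmoment] at h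
  simpa only [hc, mul_assoc] using h
end

section
/- Let γ > 0, a ≥ 0, Λ > 0 and T > 0, and let E : [0,T] → ℝ be differentiable with E(t) > 0 for all t ∈ [0,T]. Assume E′(t) ≤ a − Λ E(t)^{−γ} for all t ∈ [0,T] and Λ > a · E(0)^γ. Then for every t ∈ [0,T], E(t)^{γ+1} ≤ E(0)^{γ+1} − (γ+1)(Λ − a E(0)^γ) t; in particular E is strictly decreasing and cannot remain positive beyond the time t̄ = E(0)^{γ+1} / ((γ+1)(Λ − a E(0)^γ)). -/
/-!
Once `E ≤ E 0` on `[0, T]`, the right-hand side `a - Λ E^(-γ)` is bounded by its value at `E 0`,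
which is negative because `Λ > a E(0)^γ`; so `E` decreases strictly. The bound `E ≤ E 0` itself is
a barrier argument: `E` can never climb back to the level `E 0`, since its derivative there is
negative. Multiplying the differential inequality by `(γ + 1) E^γ` turns it into
`(E^(γ+1))' ≤ (γ + 1)(a E^γ - Λ) ≤ -(γ + 1)(Λ - a E(0)^γ)`, and integrating gives the bound on
`E^(γ+1)`, whose positivity at `T` bounds `T`.
-/

open Set

section Comparison

variable {f f' : ℝ → ℝ} {a b : ℝ}

theorem le_left_of_hasDerivAt_neg_of_eq (hf : ∀ x ∈ Icc a b, HasDerivAt f (f' x) x)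
    (hneg : ∀ x ∈ Ico a b, f x = f a → f' x < 0) : ∀ x ∈ Icc a b, f x ≤ f a :=
  fun _ hx => image_le_of_deriv_right_lt_deriv_boundary (B := fun _ => f a)
    (fun x hx => (hf x hx).continuousAt.continuousWithinAt)
    (fun x hx => (hf x (Ico_subset_Icc_self hx)).hasDerivWithinAt) le_rfl
    (fun _ => hasDerivAt_const _ (f a)) hneg hx

theorem strictAntiOn_Icc_of_hasDerivAt_neg (hf : ∀ x ∈ Icc a b, HasDerivAt f (f' x) x)
    (hneg : ∀ x ∈ Icc a b, f' x < 0) : StrictAntiOn f (Icc a b) := by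
  refine strictAntiOn_of_hasDerivWithinAt_neg (f' := f') (convex_Icc a b)
    (fun x hx => (hf x hx).continuousAt.continuousWithinAt) (fun x hx => ?_) (fun x hx => ?_)
  all_goals rw [interior_Icc] at hx
  · exact (hf x (Ioo_subset_Icc_self hx)).hasDerivWithinAt
  · exact hneg x (Ioo_subset_Icc_self hx)

theorem le_sub_mul_of_hasDerivAt_le {C : ℝ} (hf : ∀ x ∈ Icc a b, HasDerivAt f (f' x) x)
    (hle : ∀ x ∈ Icc a b, f' x ≤ -C) : ∀ x ∈ Icc a b, f x ≤ f a - C * (x - a) := by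
  have hline (x : ℝ) : HasDerivAt (fun x => f a - C * (x - a)) (-C) x := by
    simpa using ((hasDerivAt_id x).sub_const a).const_mul C |>.const_sub (f a)
  exact fun _ hx => image_le_of_deriv_right_le_deriv_boundary
    (fun x hx => (hf x hx).continuousAt.continuousWithinAt)
    (fun x hx => (hf x (Ico_subset_Icc_self hx)).hasDerivWithinAt) (by simp)
    (fun x _ => (hline x).continuousAt.continuousWithinAt) (fun x _ => (hline x).hasDerivWithinAt)
    (fun x hx => hle x (Ico_subset_Icc_self hx)) hx

end Comparison

section RightHandSide

variable {γ a Λ x y d : ℝ}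

theorem sub_mul_rpow_neg_le_of_le (hγ : 0 ≤ γ) (hΛ : 0 ≤ Λ) (hx : 0 < x) (hxy : x ≤ y) :
    a - Λ * x ^ (-γ) ≤ a - Λ * y ^ (-γ) := by
  gcongr a - Λ * ?_
  exact Real.rpow_le_rpow_of_nonpos hx hxy (neg_nonpos.mpr hγ)

theorem sub_mul_rpow_neg_neg (hy : 0 < y) (h : a * y ^ γ < Λ) : a - Λ * y ^ (-γ) < 0 := by
  rwa [Real.rpow_neg hy.le, sub_neg, ← div_eq_mul_inv, lt_div_iff₀ (Real.rpow_pos_of_pos hy γ)]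

theorem mul_rpow_le_of_le_sub_mul_rpow_neg (hγ : 0 ≤ γ) (ha : 0 ≤ a) (hx : 0 < x) (hxy : x ≤ y)
    (hd : d ≤ a - Λ * x ^ (-γ)) : d * (γ + 1) * x ^ γ ≤ -((γ + 1) * (Λ - a * y ^ γ)) := by
  have hcancel : x ^ (-γ) * x ^ γ = 1 := by rw [← Real.rpow_add hx, neg_add_cancel, Real.rpow_zero]
  have hmono : (γ + 1) * (a * x ^ γ) ≤ (γ + 1) * (a * y ^ γ) := by gcongr
  calc d * (γ + 1) * x ^ γ ≤ (a - Λ * x ^ (-γ)) * (γ + 1) * x ^ γ := by gcongr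
    _ = (γ + 1) * (a * x ^ γ - Λ) := by linear_combination (-(γ + 1) * Λ) * hcancel
    _ ≤ -((γ + 1) * (Λ - a * y ^ γ)) := by linarith

end RightHandSide

/-- Differential inequality comparison used for finite-time annihilation of the
second moment: if `E' ≤ a - Λ E^(-γ)` with `Λ > a E(0)^γ`, then
`E(t)^(γ+1) ≤ E(0)^(γ+1) - (γ+1)(Λ - a E(0)^γ) t`; in particular `E` is
strictly decreasing and cannot remain positive beyond
`t̄ = E(0)^(γ+1)/((γ+1)(Λ - a E(0)^γ))`. -/
theorem finite_time_annihilation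
    (γ a Λ T : ℝ) (E E' : ℝ → ℝ)
    (hγ : 0 < γ) (ha : 0 ≤ a) (hΛ : 0 < Λ) (hT : 0 < T)
    (hderiv : ∀ t ∈ Icc (0:ℝ) T, HasDerivAt E (E' t) t)
    (hpos : ∀ t ∈ Icc (0:ℝ) T, 0 < E t)
    (hineq : ∀ t ∈ Icc (0:ℝ) T, E' t ≤ a - Λ * (E t) ^ (-γ))
    (hΛa : a * (E 0) ^ γ < Λ) :
    (∀ t ∈ Icc (0:ℝ) T,
        (E t) ^ (γ + 1) ≤ (E 0) ^ (γ + 1) - (γ + 1) * (Λ - a * (E 0) ^ γ) * t)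
      ∧ StrictAntiOn E (Icc (0:ℝ) T)
      ∧ T < (E 0) ^ (γ + 1) / ((γ + 1) * (Λ - a * (E 0) ^ γ)) := by
  have hT₀ : T ∈ Icc (0:ℝ) T := ⟨hT.le, le_rfl⟩
  have hE₀ : 0 < E 0 := hpos 0 ⟨le_rfl, hT.le⟩
  have hrhs : a - Λ * E 0 ^ (-γ) < 0 := sub_mul_rpow_neg_neg hE₀ hΛa
  have hle : ∀ t ∈ Icc (0:ℝ) T, E t ≤ E 0 := le_left_of_hasDerivAt_neg_of_eq hderiv
    fun t ht heq => (hineq t (Ico_subset_Icc_self ht)).trans_lt (heq ▸ hrhs)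
  have hneg : ∀ t ∈ Icc (0:ℝ) T, E' t < 0 := fun t ht =>
    ((hineq t ht).trans (sub_mul_rpow_neg_le_of_le hγ.le hΛ.le (hpos t ht) (hle t ht))).trans_lt hrhs
  have hbound : ∀ t ∈ Icc (0:ℝ) T,
      E t ^ (γ + 1) ≤ E 0 ^ (γ + 1) - (γ + 1) * (Λ - a * E 0 ^ γ) * t := by
    simpa using le_sub_mul_of_hasDerivAt_le
      (fun t ht => (hderiv t ht).rpow_const (p := γ + 1) (Or.inl (hpos t ht).ne'))
      fun t ht => by
        simpa only [add_sub_cancel_right] using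
          mul_rpow_le_of_le_sub_mul_rpow_neg hγ.le ha (hpos t ht) (hle t ht) (hineq t ht)
  refine ⟨hbound, strictAntiOn_Icc_of_hasDerivAt_neg hderiv hneg, ?_⟩
  have hK : 0 < (γ + 1) * (Λ - a * E 0 ^ γ) := mul_pos (by linarith) (by linarith)
  rw [lt_div_iff₀ hK]
  linarith [hbound T hT₀, Real.rpow_pos_of_pos (hpos T hT₀) (γ + 1)]
end

section
/- Let λ* ∈ ℝ, β* ≥ 0, α > 0, and let f : [0,∞) × [−1,1] → [0,∞) be a smooth solution of the rescaled Fokker–Planck equation ∂_τ f(τ,w) = ∂_w [ w f(τ,w)(λ* + β* H(w)^α f(τ,w)^α) + H(w) ∂_w f(τ,w) ] on (0,∞) × (−1,1), C¹ in τ and C² in w up to the boundary, satisfying the no-flux boundary conditions that the flux w f(λ* + β* H^α f^α) + H ∂_w f vanishes at w = ±1, and such that all integrals below are finite and differentiation under the integral sign is justified. Then d/dτ ∫_{−1}^1 f(τ,w)² dw = −2 ∫_{−1}^1 H(w) |∂_w f(τ,w)|² dw + λ* ∫_{−1}^1 f(τ,w)² dw + (2β*/(α+2)) ∫_{−1}^1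 H(w)^{α−1} (1 − (1+2α) w²) f(τ,w)^{α+2} dw. -/
/-!
Multiply the equation by `2 f` and integrate by parts. With `J` the flux, `∫ 2 f ∂_w J = -∫ 2 f_w J`,
and the transport parts of `2 f_w J` are exact derivatives up to a weight:
`2 λ* w f f_w = λ* w (f²)_w` and `2 β* w H^α f^(α+1) f_w = (2β*/(α+2)) (w H^α) (f^(α+2))_w`,
with `(w H^α)' = H^(α-1) (1 - (1+2α) w²)`. All boundary terms are collected in
`G = 2 f J - λ* w f² - (2β*/(α+2)) w H^α f^(α+2)`, whose derivative is `2 f ∂_w J` minus the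
claimed rate density; since `H^α` vanishes at `w = ±1`, `G = f J = 0` there by the no-flux
condition. Every part of `∂_w J` is continuous up to the boundary except `β* (w H^α)' f^(α+1)`,
whose product with `f` is integrable by assumption, so the fundamental theorem of calculus applies.
-/

open MeasureTheory Set

/-- The flux of the rescaled Fokker–Planck equation for consensus dynamics:
`J(τ,w) = w f (λ* + β* H^α f^α) + H ∂_w f`, with `H(w) = 1 - w²`. -/
noncomputable def rescaledFlux (lams betas alpha : ℝ) (f : ℝ → ℝ → ℝ) (t w : ℝ) : ℝ :=
  w * f t w * (lams + betas * (1 - w ^ 2) ^ alpha * f t w ^ alpha)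
    + (1 - w ^ 2) * deriv (f t) w

theorem integral_Ioo_eq_sub_of_hasDerivAt {a b : ℝ} (hab : a ≤ b) {G g : ℝ → ℝ}
    (hG : ContinuousOn G (Icc a b)) (hd : ∀ x ∈ Ioo a b, HasDerivAt G (g x) x)
    (hg : IntegrableOn g (Ioo a b)) : ∫ x in Ioo a b, g x = G b - G a := by
  rw [← integral_Ioc_eq_integral_Ioo, ← intervalIntegral.integral_of_le hab]
  exact intervalIntegral.integral_eq_sub_of_hasDerivAt_of_le hab hG hd
    ((intervalIntegrable_iff_integrableOn_Ioo_of_le hab).2 hg)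

theorem ContDiffOn.hasDerivAt_derivWithin_Icc {u : ℝ → ℝ} {a b x : ℝ}
    (hu : ContDiffOn ℝ 1 u (Icc a b)) (hx : x ∈ Ioo a b) :
    HasDerivAt u (derivWithin u (Icc a b) x) x := by
  have hnhds : Icc a b ∈ nhds x := Icc_mem_nhds hx.1 hx.2
  rw [derivWithin_of_mem_nhds hnhds]
  exact ((hu.contDiffAt hnhds).differentiableAt one_ne_zero).hasDerivAt

theorem hasDerivAt_mul_one_sub_sq_rpow (alpha : ℝ) {w : ℝ} (hw : w ∈ Ioo (-1 : ℝ) 1) :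
    HasDerivAt (fun y => y * (1 - y ^ 2) ^ alpha)
      ((1 - w ^ 2) ^ (alpha - 1) * (1 - (1 + 2 * alpha) * w ^ 2)) w := by
  have hH : 0 < 1 - w ^ 2 := by nlinarith [hw.1, hw.2]
  refine ((hasDerivAt_id w).mul
    (((hasDerivAt_pow 2 w).const_sub 1).rpow_const (p := alpha) (Or.inl hH.ne'))).congr_deriv ?_
  rw [Real.rpow_sub_one hH.ne']
  simp only [id_eq, Nat.cast_ofNat, Nat.add_one_sub_one, pow_one]
  field_simp
  ring

noncomputable def l2BoundaryTerm (lams betas alpha : ℝ) (f : ℝ → ℝ → ℝ) (t w : ℝ) : ℝ :=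
  2 * f t w * rescaledFlux lams betas alpha f t w - lams * (w * f t w ^ 2)
    - 2 * betas / (alpha + 2) * (w * (1 - w ^ 2) ^ alpha * f t w ^ (alpha + 2))

noncomputable def l2RateDensity (lams betas alpha : ℝ) (f : ℝ → ℝ → ℝ) (t w : ℝ) : ℝ :=
  -2 * ((1 - w ^ 2) * deriv (f t) w ^ 2) + lams * f t w ^ 2
    + 2 * betas / (alpha + 2)
      * ((1 - w ^ 2) ^ (alpha - 1) * (1 - (1 + 2 * alpha) * w ^ 2) * f t w ^ (alpha + 2))

section RescaledFlux

variable {lams betas alpha : ℝ} {f : ℝ → ℝ → ℝ} {t : ℝ}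

/-- At `w = ±1` the two-sided `deriv (f t) w` is a junk value, but it is multiplied by
`1 - w ^ 2 = 0`. -/
theorem rescaledFlux_eqOn_Icc (halpha : 0 < alpha) (hnn : ∀ w, 0 ≤ f t w) :
    EqOn (rescaledFlux lams betas alpha f t)
      (fun w => lams * (w * f t w) + betas * (w * (1 - w ^ 2) ^ alpha * f t w ^ (alpha + 1))
        + (1 - w ^ 2) * derivWithin (f t) (Icc (-1) 1) w) (Icc (-1) 1) := by
  intro w hw
  have hdiff : (1 - w ^ 2) * deriv (f t) w = (1 - w ^ 2) * derivWithin (f t) (Icc (-1) 1) w := by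
    rcases eq_endpoints_or_mem_Ioo_of_mem_Icc hw with rfl | rfl | hw
    · norm_num
    · norm_num
    · rw [derivWithin_of_mem_nhds (Icc_mem_nhds hw.1 hw.2)]
  simp only [rescaledFlux, ← hdiff, Real.rpow_add_one' (hnn w) (by linarith : alpha + 1 ≠ 0)]
  ring

theorem rescaledFlux_of_sq_eq_one (halpha : 0 < alpha) {w : ℝ} (hw : w ^ 2 = 1) :
    rescaledFlux lams betas alpha f t w = lams * (w * f t w) := by
  simp only [rescaledFlux, hw, sub_self, Real.zero_rpow halpha.ne']
  ring

theorem continuousOn_rescaledFlux (halpha : 0 < alpha) (hnn : ∀ w, 0 ≤ f t w)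
    (hu : ContDiffOn ℝ 2 (f t) (Icc (-1) 1)) :
    ContinuousOn (rescaledFlux lams betas alpha f t) (Icc (-1) 1) := by
  refine ContinuousOn.congr ?_ (rescaledFlux_eqOn_Icc halpha hnn)
  have hu0 := hu.continuousOn
  have hu1 := hu.continuousOn_derivWithin (uniqueDiffOn_Icc (by norm_num)) (by norm_num)
  fun_prop (disch := intros; positivity)

theorem exists_continuousOn_hasDerivAt_rescaledFlux (halpha : 0 < alpha) (hnn : ∀ w, 0 ≤ f t w)
    (hu : ContDiffOn ℝ 2 (f t) (Icc (-1) 1)) :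
    ∃ R : ℝ → ℝ, ContinuousOn R (Icc (-1) 1) ∧ ∀ w ∈ Ioo (-1 : ℝ) 1,
      HasDerivAt (rescaledFlux lams betas alpha f t) (R w + betas *
        ((1 - w ^ 2) ^ (alpha - 1) * (1 - (1 + 2 * alpha) * w ^ 2) * f t w ^ (alpha + 1))) w := by
  set u1 := derivWithin (f t) (Icc (-1) 1)
  set u2 := derivWithin u1 (Icc (-1) 1)
  have hUD : UniqueDiffOn ℝ (Icc (-1 : ℝ) 1) := uniqueDiffOn_Icc (by norm_num)
  have hu1 : ContDiffOn ℝ 1 u1 (Icc (-1) 1) := hu.derivWithin hUD (by norm_num)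
  refine ⟨fun w => lams * (f t w + w * u1 w)
      + betas * (w * (1 - w ^ 2) ^ alpha * (u1 w * (alpha + 1) * f t w ^ alpha))
      + (-(2 * w) * u1 w + (1 - w ^ 2) * u2 w), ?_, fun w hw => ?_⟩
  · have hu0 := hu.continuousOn
    have hu1c := hu1.continuousOn
    have hu2c := hu1.continuousOn_derivWithin hUD le_rfl
    fun_prop (disch := intros; positivity)
  · have hd0 := (hu.of_le (by norm_num)).hasDerivAt_derivWithin_Icc hw
    have hd1 := hu1.hasDerivAt_derivWithin_Icc hw
    have hpow := hd0.rpow_const (p := alpha + 1) (Or.inr (by linarith))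
    rw [add_sub_cancel_right] at hpow
    have hsum := ((((hasDerivAt_id w).mul hd0).const_mul lams).add
      (((hasDerivAt_mul_one_sub_sq_rpow alpha hw).mul hpow).const_mul betas)).add
      (((hasDerivAt_pow 2 w).const_sub 1).mul hd1)
    refine (hsum.congr_of_eventuallyEq ?_).congr_deriv ?_
    · filter_upwards [Icc_mem_nhds hw.1 hw.2] with y hy
      exact rescaledFlux_eqOn_Icc halpha hnn hy
    · simp only [id]
      ring

theorem l2BoundaryTerm_of_sq_eq_one (halpha : 0 < alpha) {w : ℝ} (hw : w ^ 2 = 1) :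
    l2BoundaryTerm lams betas alpha f t w = f t w * rescaledFlux lams betas alpha f t w := by
  simp only [l2BoundaryTerm, rescaledFlux_of_sq_eq_one halpha hw, hw, sub_self,
    Real.zero_rpow halpha.ne']
  ring

theorem continuousOn_l2BoundaryTerm (halpha : 0 < alpha) (hnn : ∀ w, 0 ≤ f t w)
    (hu : ContDiffOn ℝ 2 (f t) (Icc (-1) 1)) :
    ContinuousOn (l2BoundaryTerm lams betas alpha f t) (Icc (-1) 1) := by
  have hu0 := hu.continuousOn
  have hJ := continuousOn_rescaledFlux (lams := lams) (betas := betas) halpha hnn hu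
  unfold l2BoundaryTerm
  fun_prop (disch := intros; positivity)

theorem hasDerivAt_l2BoundaryTerm (halpha : 0 < alpha) (hnn : ∀ w, 0 ≤ f t w) {w j : ℝ}
    (hw : w ∈ Ioo (-1 : ℝ) 1) (hu : DifferentiableAt ℝ (f t) w)
    (hJ : HasDerivAt (rescaledFlux lams betas alpha f t) j w) :
    HasDerivAt (l2BoundaryTerm lams betas alpha f t)
      (2 * f t w * j - l2RateDensity lams betas alpha f t w) w := by
  have hd := hu.hasDerivAt
  have hsum := (((hd.const_mul 2).mul hJ).sub (((hasDerivAt_id w).mul (hd.pow 2)).const_mul lams)).sub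
    (((hasDerivAt_mul_one_sub_sq_rpow alpha hw).mul
      (hd.rpow_const (p := alpha + 2) (Or.inr (by linarith)))).const_mul (2 * betas / (alpha + 2)))
  refine hsum.congr_deriv ?_
  have hpow1 : f t w ^ (alpha + 1) = f t w ^ alpha * f t w :=
    Real.rpow_add_one' (hnn w) (by linarith)
  have hpow2 : f t w ^ (alpha + 2) = f t w ^ alpha * f t w * f t w := by
    rw [← hpow1, ← Real.rpow_add_one' (hnn w) (by linarith)]
    ring_nf
  have hα2 : alpha + 2 ≠ 0 := by positivity
  rw [show alpha + 2 - 1 = alpha + 1 by ring]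
  simp only [l2RateDensity, rescaledFlux, hpow1, hpow2, id, Pi.pow_apply]
  field_simp
  ring

theorem integrableOn_mul_deriv_rescaledFlux (halpha : 0 < alpha) (hnn : ∀ w, 0 ≤ f t w)
    (hu : ContDiffOn ℝ 2 (f t) (Icc (-1) 1))
    (hweight : IntegrableOn (fun w => (1 - w ^ 2) ^ (alpha - 1) * (1 - (1 + 2 * alpha) * w ^ 2)
      * f t w ^ (alpha + 2)) (Ioo (-1 : ℝ) 1)) :
    IntegrableOn (fun w => 2 * f t w * deriv (rescaledFlux lams betas alpha f t) w)
      (Ioo (-1 : ℝ) 1) := by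
  obtain ⟨R, hRc, hR⟩ :=
    exists_continuousOn_hasDerivAt_rescaledFlux (lams := lams) (betas := betas) halpha hnn hu
  have hreg : IntegrableOn (fun w => 2 * f t w * R w) (Ioo (-1 : ℝ) 1) :=
    ((continuousOn_const.mul hu.continuousOn).mul hRc).integrableOn_Icc.mono_set
      Ioo_subset_Icc_self
  refine (hreg.add (hweight.const_mul (2 * betas))).congr_fun (fun w hw => ?_) measurableSet_Ioo
  have hpow : f t w ^ (alpha + 2) = f t w ^ (alpha + 1) * f t w := by
    rw [← Real.rpow_add_one' (hnn w) (by linarith)]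
    ring_nf
  rw [Pi.add_apply, (hR w hw).deriv, hpow]
  ring

theorem integrableOn_l2RateDensity
    (hsq : IntegrableOn (fun w => f t w ^ 2) (Ioo (-1 : ℝ) 1))
    (hgrad : IntegrableOn (fun w => (1 - w ^ 2) * deriv (f t) w ^ 2) (Ioo (-1 : ℝ) 1))
    (hweight : IntegrableOn (fun w => (1 - w ^ 2) ^ (alpha - 1) * (1 - (1 + 2 * alpha) * w ^ 2)
      * f t w ^ (alpha + 2)) (Ioo (-1 : ℝ) 1)) :
    IntegrableOn (l2RateDensity lams betas alpha f t) (Ioo (-1 : ℝ) 1) :=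
  ((hgrad.const_mul (-2)).add (hsq.const_mul lams)).add (hweight.const_mul _)

theorem integral_l2RateDensity
    (hsq : IntegrableOn (fun w => f t w ^ 2) (Ioo (-1 : ℝ) 1))
    (hgrad : IntegrableOn (fun w => (1 - w ^ 2) * deriv (f t) w ^ 2) (Ioo (-1 : ℝ) 1))
    (hweight : IntegrableOn (fun w => (1 - w ^ 2) ^ (alpha - 1) * (1 - (1 + 2 * alpha) * w ^ 2)
      * f t w ^ (alpha + 2)) (Ioo (-1 : ℝ) 1)) :
    ∫ w in Ioo (-1 : ℝ) 1, l2RateDensity lams betas alpha f t w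
      = -2 * (∫ w in Ioo (-1 : ℝ) 1, (1 - w ^ 2) * deriv (f t) w ^ 2)
        + lams * (∫ w in Ioo (-1 : ℝ) 1, f t w ^ 2)
        + 2 * betas / (alpha + 2) * ∫ w in Ioo (-1 : ℝ) 1,
            (1 - w ^ 2) ^ (alpha - 1) * (1 - (1 + 2 * alpha) * w ^ 2) * f t w ^ (alpha + 2) := by
  have hD₁ := hgrad.const_mul (-2)
  have hD₂ := hsq.const_mul lams
  unfold l2RateDensity
  rw [integral_add ?_ (hweight.const_mul _), integral_add hD₁ hD₂, integral_const_mul,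
    integral_const_mul, integral_const_mul]
  exact hD₁.add hD₂

theorem integral_mul_deriv_rescaledFlux (halpha : 0 < alpha) (hnn : ∀ w, 0 ≤ f t w)
    (hu : ContDiffOn ℝ 2 (f t) (Icc (-1) 1))
    (hJ_one : rescaledFlux lams betas alpha f t 1 = 0)
    (hJ_neg_one : rescaledFlux lams betas alpha f t (-1) = 0)
    (hweight : IntegrableOn (fun w => (1 - w ^ 2) ^ (alpha - 1) * (1 - (1 + 2 * alpha) * w ^ 2)
      * f t w ^ (alpha + 2)) (Ioo (-1 : ℝ) 1))
    (hD : IntegrableOn (l2RateDensity lams betas alpha f t) (Ioo (-1 : ℝ) 1)) :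
    ∫ w in Ioo (-1 : ℝ) 1, 2 * f t w * deriv (rescaledFlux lams betas alpha f t) w
      = ∫ w in Ioo (-1 : ℝ) 1, l2RateDensity lams betas alpha f t w := by
  have hP := integrableOn_mul_deriv_rescaledFlux (lams := lams) (betas := betas) halpha hnn hu
    hweight
  obtain ⟨R, -, hR⟩ :=
    exists_continuousOn_hasDerivAt_rescaledFlux (lams := lams) (betas := betas) halpha hnn hu
  have hG := integral_Ioo_eq_sub_of_hasDerivAt (by norm_num)
    (continuousOn_l2BoundaryTerm halpha hnn hu)
    (fun w hw => hasDerivAt_l2BoundaryTerm halpha hnn hw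
      ((hu.of_le (by norm_num)).hasDerivAt_derivWithin_Icc hw).differentiableAt
      (hR w hw).differentiableAt.hasDerivAt) (hP.sub hD)
  rw [l2BoundaryTerm_of_sq_eq_one halpha (by norm_num), hJ_one,
    l2BoundaryTerm_of_sq_eq_one halpha (by norm_num), hJ_neg_one, integral_sub hP hD] at hG
  linarith

end RescaledFlux

theorem l2_norm_evolution_general
    (lams betas alpha : ℝ) (f : ℝ → ℝ → ℝ)
    (halpha : 0 < alpha)
    (hnonneg : ∀ t w, 0 ≤ f t w)
    (hC1t : ∀ w ∈ Icc (-1:ℝ) 1, ContDiffOn ℝ 1 (fun t => f t w) (Ici 0))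
    (hC2w : ∀ t ∈ Ici (0:ℝ), ContDiffOn ℝ 2 (f t) (Icc (-1) 1))
    (hpde : ∀ t ∈ Ioi (0:ℝ), ∀ w ∈ Ioo (-1:ℝ) 1,
      deriv (fun s => f s w) t = deriv (rescaledFlux lams betas alpha f t) w)
    (hnoflux : ∀ t ∈ Ioi (0:ℝ),
      rescaledFlux lams betas alpha f t 1 = 0 ∧ rescaledFlux lams betas alpha f t (-1) = 0)
    (hint2 : ∀ t ∈ Ici (0:ℝ), IntegrableOn (fun w => (f t w) ^ 2) (Ioo (-1:ℝ) 1))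
    (hint3 : ∀ t ∈ Ici (0:ℝ),
      IntegrableOn (fun w => (1 - w ^ 2) * (deriv (f t) w) ^ 2) (Ioo (-1:ℝ) 1))
    (hint4 : ∀ t ∈ Ici (0:ℝ),
      IntegrableOn
        (fun w => (1 - w ^ 2) ^ (alpha - 1) * (1 - (1 + 2 * alpha) * w ^ 2)
          * f t w ^ (alpha + 2)) (Ioo (-1:ℝ) 1))
    (hdui : ∀ t ∈ Ioi (0:ℝ),
      HasDerivAt (fun s => ∫ w in Ioo (-1:ℝ) 1, (f s w) ^ 2)
        (∫ w in Ioo (-1:ℝ) 1, deriv (fun s => (f s w) ^ 2) t) t) :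
    ∀ t ∈ Ioi (0:ℝ),
      HasDerivAt (fun s => ∫ w in Ioo (-1:ℝ) 1, (f s w) ^ 2)
        (-2 * (∫ w in Ioo (-1:ℝ) 1, (1 - w ^ 2) * (deriv (f t) w) ^ 2)
          + lams * (∫ w in Ioo (-1:ℝ) 1, (f t w) ^ 2)
          + (2 * betas / (alpha + 2))
            * ∫ w in Ioo (-1:ℝ) 1, (1 - w ^ 2) ^ (alpha - 1)
                * (1 - (1 + 2 * alpha) * w ^ 2) * f t w ^ (alpha + 2)) t := by
  intro t ht
  have ht₀ : t ∈ Ici (0 : ℝ) := mem_Ici.mpr (le_of_lt ht)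
  have hchain : ∀ w ∈ Ioo (-1 : ℝ) 1,
      deriv (fun s => f s w ^ 2) t = 2 * f t w * deriv (rescaledFlux lams betas alpha f t) w := by
    intro w hw
    have hdiff : DifferentiableAt ℝ (fun s => f s w) t :=
      ((hC1t w (Ioo_subset_Icc_self hw)).contDiffAt (Ici_mem_nhds ht)).differentiableAt
        one_ne_zero
    rw [deriv_fun_pow hdiff, hpde t ht w hw]
    norm_num
  have h := hdui t ht
  rwa [setIntegral_congr_fun measurableSet_Ioo hchain,
    integral_mul_deriv_rescaledFlux halpha (hnonneg t) (hC2w t ht₀) (hnoflux t ht).1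
      (hnoflux t ht).2 (hint4 t ht₀)
      (integrableOn_l2RateDensity (hint2 t ht₀) (hint3 t ht₀) (hint4 t ht₀)),
    integral_l2RateDensity (hint2 t ht₀) (hint3 t ht₀) (hint4 t ht₀)] at h

/-- Evolution of the `L²`-norm for a smooth nonnegative solution of the
rescaled Fokker–Planck equation with no-flux boundary conditions:
`d/dτ ∫ f² = −2 ∫ H (∂_w f)² + λ* ∫ f² + (2β*/(α+2)) ∫ H^(α−1)(1−(1+2α)w²) f^(α+2)`. -/
theorem l2_norm_evolution
    (lams betas alpha : ℝ) (f : ℝ → ℝ → ℝ)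
    (hbetas : 0 ≤ betas) (halpha : 0 < alpha)
    (hnonneg : ∀ t w, 0 ≤ f t w)
    (hC1t : ∀ w ∈ Icc (-1:ℝ) 1, ContDiffOn ℝ 1 (fun t => f t w) (Ici 0))
    (hC2w : ∀ t ∈ Ici (0:ℝ), ContDiffOn ℝ 2 (f t) (Icc (-1) 1))
    (hpde : ∀ t ∈ Ioi (0:ℝ), ∀ w ∈ Ioo (-1:ℝ) 1,
      deriv (fun s => f s w) t = deriv (rescaledFlux lams betas alpha f t) w)
    (hnoflux : ∀ t ∈ Ioi (0:ℝ),
      rescaledFlux lams betas alpha f t 1 = 0 ∧ rescaledFlux lams betas alpha f t (-1) = 0)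
    (hint1 : ∀ t ∈ Ici (0:ℝ), IntegrableOn (f t) (Ioo (-1:ℝ) 1))
    (hint2 : ∀ t ∈ Ici (0:ℝ), IntegrableOn (fun w => (f t w) ^ 2) (Ioo (-1:ℝ) 1))
    (hint3 : ∀ t ∈ Ici (0:ℝ),
      IntegrableOn (fun w => (1 - w ^ 2) * (deriv (f t) w) ^ 2) (Ioo (-1:ℝ) 1))
    (hint4 : ∀ t ∈ Ici (0:ℝ),
      IntegrableOn
        (fun w => (1 - w ^ 2) ^ (alpha - 1) * (1 - (1 + 2 * alpha) * w ^ 2)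
          * f t w ^ (alpha + 2)) (Ioo (-1:ℝ) 1))
    (hdui : ∀ t ∈ Ioi (0:ℝ),
      HasDerivAt (fun s => ∫ w in Ioo (-1:ℝ) 1, (f s w) ^ 2)
        (∫ w in Ioo (-1:ℝ) 1, deriv (fun s => (f s w) ^ 2) t) t) :
    ∀ t ∈ Ioi (0:ℝ),
      HasDerivAt (fun s => ∫ w in Ioo (-1:ℝ) 1, (f s w) ^ 2)
        (-2 * (∫ w in Ioo (-1:ℝ) 1, (1 - w ^ 2) * (deriv (f t) w) ^ 2)
          + lams * (∫ w in Ioo (-1:ℝ) 1, (f t w) ^ 2)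
          + (2 * betas / (alpha + 2))
            * ∫ w in Ioo (-1:ℝ) 1, (1 - w ^ 2) ^ (alpha - 1)
                * (1 - (1 + 2 * alpha) * w ^ 2) * f t w ^ (alpha + 2)) t :=
  l2_norm_evolution_general lams betas alpha f halpha hnonneg hC1t hC2w hpde hnoflux hint2 hint3
    hint4 hdui
end

section
/- Let R > 0 and let φ : [−R,R] → ℝ be continuously differentiable with all integrals below finite. Writing ⟨φ⟩ = (1/(2R)) ∫_{−R}^R φ(v) dv for the average of φ over (−R,R), the weighted Poincaré-type inequality ∫_{−R}^R (φ(w) − ⟨φ⟩)² dw ≤ (1/2) ∫_{−R}^R (R² − w²) |φ′(w)|² dw holds. -/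
/-! With `ψ = φ - ⟨φ⟩`, its primitive `F x = ∫_a^x ψ` vanishes at both endpoints, so integration
by parts gives `∫ ψ² = -∫ F φ'`. Writing `u x = (x - a)(b - x)`, the pointwise bound
`-F φ' ≤ F²/u + u φ'²/4` reduces the claim to the Hardy-type inequality `∫ F²/u ≤ ½ ∫ F'²`.
That one follows by completing the square: for `G = F² u' / (2u)` one has
`F'²/2 - F²/u - G' = ½ (F' - F u'/u)² ≥ 0`, and `G → 0` at both endpoints because
`|F x| ≤ C · min (x - a) (b - x)` for a bound `C` of `|F'|`. -/

open MeasureTheory Set intervalIntegral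

section Hardy

variable {a b C : ℝ} {F f : ℝ → ℝ}

theorem abs_sub_le_mul_of_hasDerivAt_Ioo (hFc : ContinuousOn F (Icc a b))
    (hF : ∀ x ∈ Ioo a b, HasDerivAt F (f x) x) (hC : ∀ x ∈ Ioo a b, |f x| ≤ C)
    {x y : ℝ} (hx : x ∈ Icc a b) (hy : y ∈ Icc a b) (hxy : x ≤ y) :
    |F y - F x| ≤ C * (y - x) := by
  obtain rfl | hxy := hxy.eq_or_lt
  · simp
  have hsub : Ioo x y ⊆ Ioo a b := Ioo_subset_Ioo hx.1 hy.2
  obtain ⟨c, hc, hslope⟩ := exists_hasDerivAt_eq_slope F f hxy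
    (hFc.mono (Icc_subset_Icc hx.1 hy.2)) fun c hc => hF c (hsub hc)
  rw [eq_div_iff (sub_pos.2 hxy).ne'] at hslope
  rw [← hslope, abs_mul, abs_of_pos (sub_pos.2 hxy)]
  exact mul_le_mul_of_nonneg_right (hC c (hsub hc)) (sub_pos.2 hxy).le

theorem abs_le_mul_of_hasDerivAt_Ioo_of_eq_zero (hFc : ContinuousOn F (Icc a b))
    (hF : ∀ x ∈ Ioo a b, HasDerivAt F (f x) x) (hC : ∀ x ∈ Ioo a b, |f x| ≤ C)
    (ha : F a = 0) (hb : F b = 0) {x : ℝ} (hx : x ∈ Icc a b) :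
    |F x| ≤ C * (x - a) ∧ |F x| ≤ C * (b - x) := by
  have hab : a ≤ b := hx.1.trans hx.2
  constructor
  · simpa [ha] using abs_sub_le_mul_of_hasDerivAt_Ioo hFc hF hC ⟨le_rfl, hab⟩ hx hx.1
  · simpa [hb, abs_sub_comm] using abs_sub_le_mul_of_hasDerivAt_Ioo hFc hF hC hx ⟨hab, le_rfl⟩ hx.2

theorem sq_le_mul_of_abs_le {y p q : ℝ} (hp : |y| ≤ C * p) (hq : |y| ≤ C * q) :
    y ^ 2 ≤ C ^ 2 * (p * q) :=
  calc y ^ 2 = |y| * |y| := by rw [sq, abs_mul_abs_self]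
    _ ≤ (C * p) * (C * q) := mul_le_mul hp hq (abs_nonneg y) ((abs_nonneg y).trans hp)
    _ = C ^ 2 * (p * q) := by ring

theorem abs_mul_sub_le_of_abs_le {y p q : ℝ} (hp : |y| ≤ C * p) (hq : |y| ≤ C * q)
    (hp0 : 0 ≤ p) (hq0 : 0 ≤ q) : |y * (q - p)| ≤ C * (p * q) := by
  rw [abs_mul]
  rcases le_total p q with hpq | hqp
  · calc |y| * |q - p| ≤ (C * p) * q :=
          mul_le_mul hp (by rw [abs_of_nonneg (sub_nonneg.2 hpq)]; linarith) (abs_nonneg _)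
            ((abs_nonneg y).trans hp)
      _ = C * (p * q) := by ring
  · calc |y| * |q - p| ≤ (C * q) * p :=
          mul_le_mul hq (by rw [abs_of_nonpos (sub_nonpos.2 hqp)]; linarith) (abs_nonneg _)
            ((abs_nonneg y).trans hq)
      _ = C * (p * q) := by ring

/-- At `x = a` and `x = b` the division by zero returns `0`, which is also the limit there when `F`
vanishes at the endpoints. -/
noncomputable def hardyCalibration (a b : ℝ) (F : ℝ → ℝ) (x : ℝ) : ℝ :=
  F x ^ 2 * ((b - x) - (x - a)) / (2 * ((x - a) * (b - x)))

theorem hardyCalibration_eq_zero {x : ℝ} (hx : F x = 0) : hardyCalibration a b F x = 0 := by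
  simp [hardyCalibration, hx]

theorem hasDerivAt_hardyCalibration {x f' : ℝ} (hF : HasDerivAt F f' x) (hx : x ∈ Ioo a b) :
    HasDerivAt (hardyCalibration a b F)
      (f' ^ 2 / 2 - F x ^ 2 / ((x - a) * (b - x))
        - (f' - F x * ((b - x) - (x - a)) / ((x - a) * (b - x))) ^ 2 / 2) x := by
  have hp : x - a ≠ 0 := (sub_pos.2 hx.1).ne'
  have hq : b - x ≠ 0 := (sub_pos.2 hx.2).ne'
  have hnum := (hF.pow 2).mul (((hasDerivAt_id x).const_sub b).sub ((hasDerivAt_id x).sub_const a))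
  have hden := (((hasDerivAt_id x).sub_const a).mul ((hasDerivAt_id x).const_sub b)).const_mul 2
  refine (hnum.div hden (by simp [hp, hq])).congr_deriv ?_
  simp only [id, Pi.mul_apply, Pi.pow_apply, Pi.sub_apply]
  field_simp
  ring

theorem abs_hardyCalibration_le {x : ℝ} (hx : x ∈ Icc a b) (hFp : |F x| ≤ C * (x - a))
    (hFq : |F x| ≤ C * (b - x)) : |hardyCalibration a b F x| ≤ C / 2 * |F x| := by
  have hp : 0 ≤ x - a := sub_nonneg.2 hx.1
  have hq : 0 ≤ b - x := sub_nonneg.2 hx.2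
  rcases (mul_nonneg hp hq).eq_or_lt with hu | hu
  · have hFx : F x = 0 := by
      rcases mul_eq_zero.1 hu.symm with h | h
      · simpa [h] using hFp
      · simpa [h] using hFq
    simp [hardyCalibration, hFx]
  have h2u : 0 < 2 * ((x - a) * (b - x)) := by positivity
  rw [hardyCalibration, abs_div, abs_of_pos h2u, div_le_iff₀ h2u]
  calc |F x ^ 2 * ((b - x) - (x - a))| = |F x| * |F x * ((b - x) - (x - a))| := by
        rw [sq, mul_assoc, abs_mul]
    _ ≤ |F x| * (C * ((x - a) * (b - x))) :=
        mul_le_mul_of_nonneg_left (abs_mul_sub_le_of_abs_le hFp hFq hp hq) (abs_nonneg _)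
    _ = C / 2 * |F x| * (2 * ((x - a) * (b - x))) := by ring

theorem continuousOn_hardyCalibration (hFc : ContinuousOn F (Icc a b))
    (hF : ∀ x ∈ Ioo a b, HasDerivAt F (f x) x) (hC : ∀ x ∈ Ioo a b, |f x| ≤ C)
    (ha : F a = 0) (hb : F b = 0) : ContinuousOn (hardyCalibration a b F) (Icc a b) := by
  intro x hx
  by_cases hxi : x ∈ Ioo a b
  · exact (hasDerivAt_hardyCalibration (hF x hxi) hxi).continuousAt.continuousWithinAt
  have hFx : F x = 0 := by
    obtain rfl | hxa := hx.1.eq_or_lt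
    · exact ha
    obtain rfl | hxb := hx.2.eq_or_lt
    · exact hb
    exact absurd ⟨hxa, hxb⟩ hxi
  rw [ContinuousWithinAt, hardyCalibration_eq_zero hFx]
  refine squeeze_zero_norm' ?_ (by simpa [hFx] using ((hFc x hx).abs.const_mul (C / 2)).tendsto)
  filter_upwards [self_mem_nhdsWithin] with y hy
  obtain ⟨hFp, hFq⟩ := abs_le_mul_of_hasDerivAt_Ioo_of_eq_zero hFc hF hC ha hb hy
  exact abs_hardyCalibration_le hy hFp hFq

theorem integrableOn_sq_div_sub_mul_sub (hFc : ContinuousOn F (Icc a b))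
    (hF : ∀ x ∈ Ioo a b, HasDerivAt F (f x) x) (hf : ContinuousOn f (Icc a b))
    (ha : F a = 0) (hb : F b = 0) :
    IntegrableOn (fun x => F x ^ 2 / ((x - a) * (b - x))) (Icc a b) := by
  obtain ⟨C, hC⟩ := isCompact_Icc.exists_bound_of_continuousOn hf
  replace hC : ∀ x ∈ Ioo a b, |f x| ≤ C := fun x hx => hC x (Ioo_subset_Icc_self hx)
  rw [integrableOn_Icc_iff_integrableOn_Ioo]
  have hcont : ContinuousOn (fun x => F x ^ 2 / ((x - a) * (b - x))) (Ioo a b) :=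
    ((hFc.mono Ioo_subset_Icc_self).pow 2).div (by fun_prop)
      fun x hx => (mul_pos (sub_pos.2 hx.1) (sub_pos.2 hx.2)).ne'
  refine .of_bound measure_Ioo_lt_top (hcont.aestronglyMeasurable measurableSet_Ioo) (C ^ 2) ?_
  filter_upwards [ae_restrict_mem measurableSet_Ioo] with x hx
  have hu : 0 < (x - a) * (b - x) := mul_pos (sub_pos.2 hx.1) (sub_pos.2 hx.2)
  obtain ⟨hFp, hFq⟩ :=
    abs_le_mul_of_hasDerivAt_Ioo_of_eq_zero hFc hF hC ha hb (Ioo_subset_Icc_self hx)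
  rw [Real.norm_eq_abs, abs_of_nonneg (by positivity), div_le_iff₀ hu]
  exact sq_le_mul_of_abs_le hFp hFq

theorem integral_sq_div_sub_mul_sub_le (hab : a ≤ b) (hFc : ContinuousOn F (Icc a b))
    (hF : ∀ x ∈ Ioo a b, HasDerivAt F (f x) x) (hf : ContinuousOn f (Icc a b))
    (ha : F a = 0) (hb : F b = 0) :
    ∫ x in a..b, F x ^ 2 / ((x - a) * (b - x)) ≤ 1 / 2 * ∫ x in a..b, f x ^ 2 := by
  obtain ⟨C, hC⟩ := isCompact_Icc.exists_bound_of_continuousOn hf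
  replace hC : ∀ x ∈ Ioo a b, |f x| ≤ C := fun x hx => hC x (Ioo_subset_Icc_self hx)
  have hJ := integrableOn_sq_div_sub_mul_sub hFc hF hf ha hb
  have hf2 : IntegrableOn (fun x => f x ^ 2 / 2) (Icc a b) :=
    ((hf.pow 2).div_const 2).integrableOn_Icc
  have key := sub_le_integral_of_hasDeriv_right_of_le hab
    (continuousOn_hardyCalibration hFc hF hC ha hb)
    (fun x hx => (hasDerivAt_hardyCalibration (hF x hx) hx).hasDerivWithinAt) (hf2.sub hJ)
    (fun x _ => sub_le_self _ (by positivity))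
  simp only [Pi.sub_apply] at key
  rw [integral_sub ((intervalIntegrable_iff_integrableOn_Icc_of_le hab).2 hf2)
    ((intervalIntegrable_iff_integrableOn_Icc_of_le hab).2 hJ), intervalIntegral.integral_div,
    hardyCalibration_eq_zero hb, hardyCalibration_eq_zero ha, sub_self] at key
  linarith

theorem neg_mul_le_sq_div_add {y z u : ℝ} (hu : 0 < u) : -(y * z) ≤ y ^ 2 / u + u * z ^ 2 / 4 := by
  rw [div_add_div _ _ hu.ne' four_ne_zero, le_div_iff₀ (by positivity)]
  nlinarith [sq_nonneg (2 * y + u * z)]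

theorem neg_integral_mul_le_of_hasDerivAt_of_eq_zero {g : ℝ → ℝ} (hab : a ≤ b)
    (hFc : ContinuousOn F (Icc a b)) (hF : ∀ x ∈ Ioo a b, HasDerivAt F (f x) x)
    (hf : ContinuousOn f (Icc a b)) (hg : ContinuousOn g (Icc a b)) (ha : F a = 0) (hb : F b = 0) :
    -∫ x in a..b, F x * g x
      ≤ 1 / 2 * (∫ x in a..b, f x ^ 2) + 1 / 4 * ∫ x in a..b, (x - a) * (b - x) * g x ^ 2 := by
  have hJ : IntervalIntegrable (fun x => F x ^ 2 / ((x - a) * (b - x))) volume a b :=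
    (intervalIntegrable_iff_integrableOn_Icc_of_le hab).2
      (integrableOn_sq_div_sub_mul_sub hFc hF hf ha hb)
  have hw : IntervalIntegrable (fun x => (x - a) * (b - x) * g x ^ 2) volume a b :=
    ((by fun_prop : ContinuousOn (fun x : ℝ => (x - a) * (b - x)) (Icc a b)).mul
      (hg.pow 2)).intervalIntegrable_of_Icc hab
  have hamgm : ∫ x in a..b, -(F x * g x)
      ≤ ∫ x in a..b, (F x ^ 2 / ((x - a) * (b - x)) + (x - a) * (b - x) * g x ^ 2 / 4) :=
    integral_mono_on_of_le_Ioo hab ((hFc.mul hg).intervalIntegrable_of_Icc hab).neg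
      (hJ.add (hw.div_const 4))
      fun x hx => neg_mul_le_sq_div_add (mul_pos (sub_pos.2 hx.1) (sub_pos.2 hx.2))
  rw [intervalIntegral.integral_neg, integral_add hJ (hw.div_const 4),
    intervalIntegral.integral_div] at hamgm
  linarith [integral_sq_div_sub_mul_sub_le hab hFc hF hf ha hb]

end Hardy

section Poincare

variable {a b : ℝ} {f φ φ' : ℝ → ℝ}

theorem hasDerivAt_integral_of_continuousOn_Icc (hf : ContinuousOn f (Icc a b)) {x : ℝ}
    (hx : x ∈ Ioo a b) : HasDerivAt (fun x => ∫ y in a..x, f y) (f x) x :=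
  integral_hasDerivAt_right
    ((hf.mono (Icc_subset_Icc le_rfl hx.2.le)).intervalIntegrable_of_Icc hx.1.le)
    ((hf.mono Ioo_subset_Icc_self).stronglyMeasurableAtFilter isOpen_Ioo x hx)
    (hf.continuousAt (Icc_mem_nhds hx.1 hx.2))

theorem continuousOn_integral_of_continuousOn_Icc (hab : a ≤ b) (hf : ContinuousOn f (Icc a b)) :
    ContinuousOn (fun x => ∫ y in a..x, f y) (Icc a b) := by
  rw [← uIcc_of_le hab] at hf ⊢
  exact continuousOn_primitive_interval hf.integrableOn_uIcc

theorem integral_sq_sub_average_le (hab : a ≤ b) (hφc : ContinuousOn φ (Icc a b))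
    (hφ : ∀ x ∈ Ioo a b, HasDerivAt φ (φ' x) x) (hφ' : ContinuousOn φ' (Icc a b)) :
    ∫ x in a..b, (φ x - ⨍ y in a..b, φ y) ^ 2
      ≤ 1 / 2 * ∫ x in a..b, (x - a) * (b - x) * φ' x ^ 2 := by
  set m := ⨍ y in a..b, φ y
  set ψ := fun x => φ x - m
  set F := fun x => ∫ y in a..x, ψ y
  have hψc : ContinuousOn ψ (Icc a b) := hφc.sub continuousOn_const
  have hFc : ContinuousOn F (Icc a b) := continuousOn_integral_of_continuousOn_Icc hab hψc
  have hF : ∀ x ∈ Ioo a b, HasDerivAt F (ψ x) x := fun x =>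
    hasDerivAt_integral_of_continuousOn_Icc hψc
  have hFa : F a = 0 := integral_same
  have hFb : F b = 0 := by
    simp only [F, ψ, m, integral_of_le hab, ← uIoc_of_le hab]
    exact setAverage_sub_setAverage (by simp) φ
  have hψφ : IntervalIntegrable (fun x => ψ x * φ x) volume a b :=
    (hψc.mul hφc).intervalIntegrable_of_Icc hab
  have hsq : ∫ x in a..b, ψ x ^ 2 = ∫ x in a..b, ψ x * φ x :=
    calc ∫ x in a..b, ψ x ^ 2 = ∫ x in a..b, (ψ x * φ x - m * ψ x) :=
          integral_congr fun x _ => by simp only [ψ]; ring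
      _ = ∫ x in a..b, ψ x * φ x := by
          rw [integral_sub hψφ ((hψc.intervalIntegrable_of_Icc hab).const_mul m),
            intervalIntegral.integral_const_mul, show ∫ x in a..b, ψ x = F b from rfl, hFb, mul_zero, sub_zero]
  have hparts : ∫ x in a..b, F x * φ' x = -∫ x in a..b, ψ x * φ x := by
    rw [← uIcc_of_le hab] at hFc hφc hψc hφ'
    rw [integral_mul_deriv_eq_deriv_mul_of_hasDerivAt hFc hφc (by simpa [hab] using hF)
      (by simpa [hab] using hφ) hψc.intervalIntegrable hφ'.intervalIntegrable, hFa, hFb]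
    ring
  show ∫ x in a..b, ψ x ^ 2 ≤ _
  linarith [neg_integral_mul_le_of_hasDerivAt_of_eq_zero hab hFc hF hψc hφ' hFa hFb]

end Poincare

theorem weighted_poincare_general
    (R : ℝ) (φ φ' : ℝ → ℝ) (hR : 0 < R)
    (hderiv : ∀ w ∈ Icc (-R) R, HasDerivAt φ (φ' w) w)
    (hcont : ContinuousOn φ' (Icc (-R) R)) :
    ∫ w in Ioo (-R) R, (φ w - (1 / (2 * R)) * ∫ v in Ioo (-R) R, φ v) ^ 2
      ≤ (1 / 2) * ∫ w in Ioo (-R) R, (R ^ 2 - w ^ 2) * (φ' w) ^ 2 := by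
  have hRR : -R ≤ R := by linarith
  have hIoo (g : ℝ → ℝ) : ∫ w in Ioo (-R) R, g w = ∫ w in -R..R, g w := by
    rw [integral_of_le hRR, integral_Ioc_eq_integral_Ioo]
  have havg : 1 / (2 * R) * ∫ v in Ioo (-R) R, φ v = ⨍ v in -R..R, φ v := by
    rw [hIoo, interval_average_eq, smul_eq_mul]
    ring
  rw [havg, hIoo, hIoo]
  convert integral_sq_sub_average_le hRR
    (fun w hw => (hderiv w hw).continuousAt.continuousWithinAt)
    (fun w hw => hderiv w (Ioo_subset_Icc_self hw)) hcont using 4 with w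
  ring

/-- Weighted Poincaré-type inequality on `(-R,R)` with weight `R² - w²` and
sharp constant `1/2` (inequality (p-Po) of the paper). -/
theorem weighted_poincare
    (R : ℝ) (φ φ' : ℝ → ℝ) (hR : 0 < R)
    (hderiv : ∀ w ∈ Icc (-R) R, HasDerivAt φ (φ' w) w)
    (hcont : ContinuousOn φ' (Icc (-R) R))
    (hφ : IntegrableOn φ (Ioo (-R) R))
    (hφ2 : IntegrableOn (fun w => (φ w - (1 / (2 * R)) * ∫ v in Ioo (-R) R, φ v) ^ 2)
      (Ioo (-R) R))
    (hw : IntegrableOn (fun w => (R ^ 2 - w ^ 2) * (φ' w) ^ 2) (Ioo (-R) R)) :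
    ∫ w in Ioo (-R) R, (φ w - (1 / (2 * R)) * ∫ v in Ioo (-R) R, φ v) ^ 2
      ≤ (1 / 2) * ∫ w in Ioo (-R) R, (R ^ 2 - w ^ 2) * (φ' w) ^ 2 :=
  weighted_poincare_general R φ φ' hR hderiv hcont
end
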